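/- arXiv:2303.06668 — 13 statements merged into one kernel-verified Lean document; each statement's English description precedes it below -/
import Mathlib

section
/- If M is a matroid on ground set E with rank function r, and i, j are distinct elements not in K ⊆ E with r(iK) + r(jK) > r(ijK) + r(K) (i.e. (ij|K) is a conditional dependence statement of M), then for any ℓ ∉ ijK and any L ⊆ E \ ijℓK we have r(iℓjKL) + r(jKL) = r(ijKL) + r(jℓKL) (i.e. (iℓ|jKL) is a conditional independence statement). In other words, the CI-structure of a matroid satisfies the axiom (MCI). -/
open Finset

/-- A matroid on a finite ground set `E`, given by its rank function. -/
structure FinMatroid (α : Type*) [DecidableEq α] where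
  E : Finset α
  r : Finset α → ℕ
  r_empty : r ∅ = 0
  r_le_card : ∀ ⦃A⦄, A ⊆ E → r A ≤ A.card
  r_mono : ∀ ⦃A B : Finset α⦄, A ⊆ B → B ⊆ E → r A ≤ r B
  r_submod : ∀ ⦃A B : Finset α⦄, A ⊆ E → B ⊆ E → r (A ∪ B) + r (A ∩ B) ≤ r A + r B

namespace FinMatroid

variable {α : Type*} [DecidableEq α]

/-- A set is independent if it is subcardinal-tight for the rank function. -/
def Indep (M : FinMatroid α) (S : Finset α) : Prop := S ⊆ M.E ∧ M.r S = S.card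

/-- A circuit is a minimal dependent set. -/
def Circuit (M : FinMatroid α) (C : Finset α) : Prop :=
  C ⊆ M.E ∧ M.r C < C.card ∧ ∀ S, S ⊂ C → M.r S = S.card

/-- `B` is a basis of `S` if it is a maximal independent subset of `S`. -/
def BasisOf (M : FinMatroid α) (B S : Finset α) : Prop :=
  B ⊆ S ∧ M.Indep B ∧ ∀ x ∈ S, x ∉ B → ¬ M.Indep (insert x B)

/-- The conditional independence statement `(ij|K)` holds in `M`:
`r(iK) + r(jK) = r(ijK) + r(K)`. -/
def CI (M : FinMatroid α) (i j : α) (K : Finset α) : Prop :=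
  M.r (insert i K) + M.r (insert j K) = M.r (insert i (insert j K)) + M.r K

/-- A matroid is loopless if every singleton of the ground set is independent. -/
def Loopless (M : FinMatroid α) : Prop := ∀ e ∈ M.E, M.r {e} = 1

end FinMatroid

/-- Well-formedness of a CI-statement `(ij|K)` on ground set `E`. -/
def wfCI {α : Type*} [DecidableEq α] (E : Finset α) (i j : α) (K : Finset α) : Prop :=
  i ∈ E ∧ j ∈ E ∧ i ≠ j ∧ i ∉ K ∧ j ∉ K ∧ K ⊆ E

/-- The CI-structure `[[M]]` of a matroid, as a predicate on CI-statements. -/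
def FinMatroid.ciOf {α : Type*} [DecidableEq α] (M : FinMatroid α) :
    α → α → Finset α → Prop :=
  fun i j K => wfCI M.E i j K ∧ M.CI i j K

/-- Rank closure is monotone: if adding `i` to `A` doesn't raise the rank,
the same holds for any superset `B` of `A` inside the ground set. -/
lemma rank_insert_eq_of_subset {α : Type*} [DecidableEq α] (M : FinMatroid α)
    {i : α} {A B : Finset α} (hi : i ∈ M.E) (hAB : A ⊆ B) (hB : B ⊆ M.E)
    (h : M.r (insert i A) = M.r A) : M.r (insert i B) = M.r B := by
  have hA : A ⊆ M.E := hAB.trans hB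
  have hiA : insert i A ⊆ M.E := Finset.insert_subset hi hA
  have hsub := M.r_submod hiA hB
  have hu : insert i A ∪ B = insert i B := by
    rw [Finset.insert_union, Finset.union_eq_right.mpr hAB]
  have hint : A ⊆ insert i A ∩ B :=
    Finset.subset_inter (Finset.subset_insert _ _) hAB
  have h1 : M.r A ≤ M.r (insert i A ∩ B) :=
    M.r_mono hint ((Finset.inter_subset_right).trans hB)
  have h2 : M.r B ≤ M.r (insert i B) :=
    M.r_mono (Finset.subset_insert _ _) (Finset.insert_subset hi hB)
  rw [hu] at hsub
  omega

/-- the CI-structure of a matroid satisfies the axiom (MCI):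
if `(ij|K)` is a conditional dependence statement (equivalently
`r(iK) + r(jK) > r(ijK) + r(K)`) then `(iℓ|jKL)` is a conditional
independence statement. -/
theorem matroid_ci_satisfies_MCI {α : Type*} [DecidableEq α] (M : FinMatroid α)
    (i j ℓ : α) (K L : Finset α)
    (hK : K ⊆ M.E) (hi : i ∈ M.E) (hj : j ∈ M.E) (hij : i ≠ j)
    (hiK : i ∉ K) (hjK : j ∉ K)
    (hdep : M.r (insert i K) + M.r (insert j K) >
      M.r (insert i (insert j K)) + M.r K)
    (hl : ℓ ∈ M.E) (hlout : ℓ ∉ insert i (insert j K))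
    (hL : L ⊆ M.E \ (insert i (insert j (insert ℓ K)))) :
    M.CI i ℓ (insert j (K ∪ L)) := by
  have hL' : L ⊆ M.E := hL.trans (Finset.sdiff_subset)
  -- first: r(jK) = r(ijK)
  have hjKE : insert j K ⊆ M.E := Finset.insert_subset hj hK
  have hijKE : insert i (insert j K) ⊆ M.E := Finset.insert_subset hi hjKE
  have hmono : M.r (insert j K) ≤ M.r (insert i (insert j K)) :=
    M.r_mono (Finset.subset_insert _ _) hijKE
  have hstep : M.r (insert i K) ≤ M.r K + 1 := by
    have := M.r_submod (A := K) (B := {i}) hK (Finset.singleton_subset_iff.mpr hi)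
    have h1 : M.r {i} ≤ 1 := by
      simpa using M.r_le_card (Finset.singleton_subset_iff.mpr hi)
    have hu : K ∪ {i} = insert i K := by
      rw [Finset.union_comm]; rfl
    rw [hu] at this
    omega
  have hkey : M.r (insert i (insert j K)) = M.r (insert j K) := by omega
  -- extend to B = insert j (K ∪ L)
  set B := insert j (K ∪ L) with hBdef
  have hBE : B ⊆ M.E := Finset.insert_subset hj (Finset.union_subset hK hL')
  have hAB : insert j K ⊆ B := by
    intro x hx
    rcases Finset.mem_insert.mp hx with h | h
    · exact Finset.mem_insert.mpr (Or.inl h)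
    · exact Finset.mem_insert.mpr (Or.inr (Finset.mem_union_left _ h))
  have h1 : M.r (insert i B) = M.r B :=
    rank_insert_eq_of_subset M hi hAB hBE hkey
  have hlBE : insert ℓ B ⊆ M.E := Finset.insert_subset hl hBE
  have h2 : M.r (insert i (insert ℓ B)) = M.r (insert ℓ B) :=
    rank_insert_eq_of_subset M hi (hAB.trans (Finset.subset_insert _ _)) hlBE hkey
  show M.r (insert i B) + M.r (insert ℓ B) = M.r (insert i (insert ℓ B)) + M.r B
  omega
end

section
/- The CI-structure of any matroid satisfies the semigraphoid axiom: if i ⊥ j | K and i ⊥ ℓ | jK, then i ⊥ ℓ | K and i ⊥ j | ℓK. -/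
open Finset

/-- the CI-structure of any matroid satisfies the semigraphoid
axiom (SG): `i ⊥ j | K` and `i ⊥ ℓ | jK` imply `i ⊥ ℓ | K` and `i ⊥ j | ℓK`. -/
theorem matroid_ci_satisfies_SG {α : Type*} [DecidableEq α] (M : FinMatroid α)
    (i j ℓ : α) (K : Finset α)
    (hK : K ⊆ M.E) (hi : i ∈ M.E) (hj : j ∈ M.E) (hl : ℓ ∈ M.E)
    (hij : i ≠ j) (hil : i ≠ ℓ) (hjl : j ≠ ℓ)
    (hiK : i ∉ K) (hjK : j ∉ K) (hlK : ℓ ∉ K)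
    (h1 : M.CI i j K) (h2 : M.CI i ℓ (insert j K)) :
    M.CI i ℓ K ∧ M.CI i j (insert ℓ K) := by
  have hiKE : insert i K ⊆ M.E := Finset.insert_subset hi hK
  have hlKE : insert ℓ K ⊆ M.E := Finset.insert_subset hl hK
  have hilKE : insert i (insert ℓ K) ⊆ M.E := Finset.insert_subset hi hlKE
  have hjlKE : insert j (insert ℓ K) ⊆ M.E := Finset.insert_subset hj hlKE
  -- submodularity 1: r(iℓK) + r(K) ≤ r(iK) + r(ℓK)
  have hu1 : insert i K ∪ insert ℓ K = insert i (insert ℓ K) := by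
    ext x; simp only [Finset.mem_union, Finset.mem_insert]; tauto
  have hn1 : insert i K ∩ insert ℓ K = K := by
    ext x; simp only [Finset.mem_inter, Finset.mem_insert]
    constructor
    · rintro ⟨ha | ha, hb | hb⟩ <;> simp_all
    · tauto
  have hs1 := M.r_submod hiKE hlKE
  rw [hu1, hn1] at hs1
  -- submodularity 2: r(ijℓK) + r(ℓK) ≤ r(iℓK) + r(jℓK)
  have hu2 : insert i (insert ℓ K) ∪ insert j (insert ℓ K)
      = insert i (insert j (insert ℓ K)) := by
    ext x; simp only [Finset.mem_union, Finset.mem_insert]; tauto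
  have hn2 : insert i (insert ℓ K) ∩ insert j (insert ℓ K) = insert ℓ K := by
    ext x; simp only [Finset.mem_inter, Finset.mem_insert]
    constructor
    · rintro ⟨ha | ha, hb | hb⟩ <;> simp_all
    · tauto
  have hs2 := M.r_submod hilKE hjlKE
  rw [hu2, hn2] at hs2
  -- rewrite h2 so its sets match
  have e1 : insert ℓ (insert j K) = insert j (insert ℓ K) := Finset.insert_comm ℓ j K
  have e2 : insert i (insert ℓ (insert j K)) = insert i (insert j (insert ℓ K)) := by
    rw [e1]
  unfold FinMatroid.CI at h1 h2 ⊢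
  rw [e1] at h2
  omega
end

section
/- Let M be a matroid on E, K ⊆ E, and i ≠ j elements of E \ K. Then i ⊥̸ j | K if and only if there exists a circuit C of M with {i,j} ⊆ C ⊆ {i,j} ∪ K, and every circuit of M contained in {i,j} ∪ K contains either both i and j or neither of them. -/
open Finset

/-! Both ranks `r(K ∪ i)` and `r(K ∪ j)` lie in `{r K, r K + 1}`, and submodularity gives
`r(K ∪ ij) + r K ≤ r(K ∪ i) + r(K ∪ j)`; hence `(ij|K)` fails exactly when neither `i` nor `j` lies
in the closure of `K` while `j` lies in the closure of `K ∪ i`. An element `x ∉ S` lies in the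
closure of `S` iff some circuit `C` has `x ∈ C ⊆ S ∪ x` (extend a basis of `S` by `x` and take a
minimal dependent subset), and the three closure conditions translate into the circuit condition. -/

namespace FinMatroid

variable {α : Type*} [DecidableEq α] (M : FinMatroid α) {x : α} {A B S T C : Finset α}

theorem r_insert_le (hx : x ∈ M.E) (hS : S ⊆ M.E) : M.r (insert x S) ≤ M.r S + 1 := by
  have hxE : {x} ⊆ M.E := singleton_subset_iff.2 hx
  have hsub := M.r_submod hxE hS
  have hx1 := M.r_le_card hxE
  rw [← insert_eq] at hsub
  rw [card_singleton] at hx1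
  omega

theorem r_insert_insert_add_le {i j : α} {K : Finset α} (hi : i ∈ M.E) (hj : j ∈ M.E)
    (hK : K ⊆ M.E) :
    M.r (insert i (insert j K)) + M.r K ≤ M.r (insert i K) + M.r (insert j K) := by
  have hsub := M.r_submod (insert_subset hi hK) (insert_subset hj hK)
  have hK_le := M.r_mono (subset_inter (subset_insert i K) (subset_insert j K))
    (inter_subset_left.trans (insert_subset hi hK))
  rw [insert_union, union_insert, union_self] at hsub
  omega

theorem r_insert_eq_of_subset (hAB : A ⊆ B) (hB : B ⊆ M.E) (hx : x ∈ M.E)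
    (h : M.r (insert x A) = M.r A) : M.r (insert x B) = M.r B := by
  have hsub := M.r_submod (insert_subset hx (hAB.trans hB)) hB
  rw [insert_union, union_eq_right.2 hAB, h] at hsub
  have hA_le := M.r_mono (subset_inter (subset_insert x A) hAB) (inter_subset_right.trans hB)
  have hB_le := M.r_mono (subset_insert x B) (insert_subset hx hB)
  omega

theorem r_eq_card_of_subset (hST : S ⊆ T) (hT : T ⊆ M.E) (hTi : M.r T = #T) :
    M.r S = #S := by
  have hsub := M.r_submod (hST.trans hT) (sdiff_subset.trans hT : T \ S ⊆ M.E)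
  rw [union_sdiff_of_subset hST, inter_sdiff_self, M.r_empty] at hsub
  have hS_le := M.r_le_card (hST.trans hT)
  have hdiff_le := M.r_le_card (sdiff_subset.trans hT : T \ S ⊆ M.E)
  have hcard := card_sdiff_of_subset hST
  have hST_card := card_le_card hST
  omega

theorem exists_basis (hS : S ⊆ M.E) : ∃ B ⊆ S, M.r B = #B ∧ M.r B = M.r S := by
  induction S using Finset.induction_on with
  | empty => exact ⟨∅, subset_rfl, by simp [M.r_empty], rfl⟩
  | @insert y S hyS ih =>
    have hyE : y ∈ M.E := hS (mem_insert_self y S)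
    have hSE : S ⊆ M.E := (subset_insert y S).trans hS
    obtain ⟨B, hBS, hBi, hBr⟩ := ih hSE
    by_cases hspan : M.r (insert y S) = M.r S
    · exact ⟨B, hBS.trans (subset_insert y S), hBi, hBr.trans hspan.symm⟩
    · have hBy : M.r (insert y B) ≠ M.r B := fun h =>
        hspan (M.r_insert_eq_of_subset hBS hSE hyE h)
      have hBy_le := M.r_insert_le hyE (hBS.trans hSE)
      have hBy_ge := M.r_mono (subset_insert y B) (insert_subset hyE (hBS.trans hSE))
      have hSy_le := M.r_insert_le hyE hSE
      have hSy_ge := M.r_mono (subset_insert y S) hS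
      refine ⟨insert y B, insert_subset_insert y hBS, ?_, ?_⟩
      · rw [card_insert_of_notMem fun h => hyS (hBS h)]
        omega
      · omega

theorem exists_circuit_subset {D : Finset α} (hD : D ⊆ M.E) (hdep : M.r D < #D) :
    ∃ C ⊆ D, M.Circuit C := by
  obtain ⟨C, hCD, ⟨hCsub, hCdep⟩, hCmin⟩ :=
    exists_minimal_le_of_wellFoundedLT (fun C => C ⊆ D ∧ M.r C < #C) D ⟨subset_rfl, hdep⟩
  refine ⟨C, hCD, hCsub.trans hD, hCdep, fun S hSC => ?_⟩
  have hS_le := M.r_le_card ((hSC.subset.trans hCsub).trans hD)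
  by_contra hS
  exact hSC.not_ge (hCmin ⟨hSC.subset.trans hCsub, by omega⟩ hSC.le)

variable {M} in
theorem Circuit.r_insert_eq (hC : M.Circuit C) (hxC : x ∈ C) (hCS : C ⊆ insert x S)
    (hS : S ⊆ M.E) : M.r (insert x S) = M.r S := by
  obtain ⟨hCE, hCdep, hCmin⟩ := hC
  have herase := hCmin _ (erase_ssubset hxC)
  have herase_le := M.r_mono (erase_subset x C) hCE
  have hcard := card_erase_of_mem hxC
  have hspan : M.r (insert x (C.erase x)) = M.r (C.erase x) := by
    rw [insert_erase hxC]
    omega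
  exact M.r_insert_eq_of_subset (subset_insert_iff.1 hCS) hS (hCE hxC) hspan

theorem exists_circuit_of_r_insert_eq (hx : x ∈ M.E) (hxS : x ∉ S) (hS : S ⊆ M.E)
    (hspan : M.r (insert x S) = M.r S) : ∃ C, M.Circuit C ∧ x ∈ C ∧ C ⊆ insert x S := by
  obtain ⟨B, hBS, hBi, hBr⟩ := M.exists_basis hS
  have hxBE : insert x B ⊆ M.E := insert_subset hx (hBS.trans hS)
  have hxB_dep : M.r (insert x B) < #(insert x B) := by
    have := M.r_mono (insert_subset_insert x hBS) (insert_subset hx hS)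
    rw [card_insert_of_notMem fun h => hxS (hBS h)]
    omega
  obtain ⟨C, hCB, hC⟩ := M.exists_circuit_subset hxBE hxB_dep
  have hxC : x ∈ C := by
    by_contra hxC
    have := M.r_eq_card_of_subset ((subset_insert_iff_of_notMem hxC).1 hCB)
      (hBS.trans hS) hBi
    exact hC.2.1.ne this
  exact ⟨C, hC, hxC, hCB.trans (insert_subset_insert x hBS)⟩

theorem exists_circuit_iff_r_insert_eq (hx : x ∈ M.E) (hxS : x ∉ S) (hS : S ⊆ M.E) :
    (∃ C, M.Circuit C ∧ x ∈ C ∧ C ⊆ insert x S) ↔ M.r (insert x S) = M.r S :=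
  ⟨fun ⟨_, hC, hxC, hCS⟩ => hC.r_insert_eq hxC hCS hS,
    M.exists_circuit_of_r_insert_eq hx hxS hS⟩

theorem not_CI_iff {i j : α} {K : Finset α} (hK : K ⊆ M.E) (hi : i ∈ M.E) (hj : j ∈ M.E) :
    ¬ M.CI i j K ↔ M.r (insert i K) ≠ M.r K ∧ M.r (insert j K) ≠ M.r K ∧
      M.r (insert j (insert i K)) = M.r (insert i K) := by
  have hsub := M.r_insert_insert_add_le hi hj hK
  have hi_le := M.r_insert_le hi hK
  have hj_le := M.r_insert_le hj hK
  have hi_ge := M.r_mono (subset_insert i K) (insert_subset hi hK)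
  have hj_ge := M.r_mono (subset_insert j K) (insert_subset hj hK)
  have hij_ge := M.r_mono (subset_insert i (insert j K)) (insert_subset hi (insert_subset hj hK))
  have hji_ge := M.r_mono (subset_insert j (insert i K)) (insert_subset hj (insert_subset hi hK))
  rw [CI]
  rw [insert_comm j i K] at hji_ge ⊢
  omega

end FinMatroid

/-- `i ⊥̸ j | K` iff there is a circuit `C` with
`{i,j} ⊆ C ⊆ {i,j} ∪ K`, and every circuit contained in `{i,j} ∪ K`
contains both of `i, j` or neither of them. -/
theorem not_CI_iff_circuits {α : Type*} [DecidableEq α] (M : FinMatroid α)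
    (i j : α) (K : Finset α)
    (hK : K ⊆ M.E) (hi : i ∈ M.E) (hj : j ∈ M.E) (hij : i ≠ j)
    (hiK : i ∉ K) (hjK : j ∉ K) :
    (¬ M.CI i j K) ↔
      ((∃ C, M.Circuit C ∧ i ∈ C ∧ j ∈ C ∧ C ⊆ insert i (insert j K)) ∧
        (∀ C, M.Circuit C → C ⊆ insert i (insert j K) →
          (i ∈ C ∧ j ∈ C) ∨ (i ∉ C ∧ j ∉ C))) := by
  have hijK : i ∉ insert j K := by simp [hij, hiK]
  have hjiK : j ∉ insert i K := by simp [hij.symm, hjK]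
  rw [M.not_CI_iff hK hi hj, ne_eq, ne_eq, ← M.exists_circuit_iff_r_insert_eq hi hiK hK,
    ← M.exists_circuit_iff_r_insert_eq hj hjK hK,
    ← M.exists_circuit_iff_r_insert_eq hj hjiK (insert_subset hi hK), insert_comm j i K]
  have drop_j {C : Finset α} (hC : C ⊆ insert i (insert j K)) (hjC : j ∉ C) : C ⊆ insert i K := by
    rw [insert_comm] at hC
    exact (subset_insert_iff_of_notMem hjC).1 hC
  have drop_i {C : Finset α} (hC : C ⊆ insert i (insert j K)) (hiC : i ∉ C) : C ⊆ insert j K :=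
    (subset_insert_iff_of_notMem hiC).1 hC
  constructor
  · rintro ⟨hi_free, hj_free, C, hC, hjC, hCsub⟩
    refine ⟨⟨C, hC, ?_, hjC, hCsub⟩, fun D hD hDsub => ?_⟩
    · by_contra hiC
      exact hj_free ⟨C, hC, hjC, drop_i hCsub hiC⟩
    · by_cases hiD : i ∈ D <;> by_cases hjD : j ∈ D
      · exact .inl ⟨hiD, hjD⟩
      · exact absurd ⟨D, hD, hiD, drop_j hDsub hjD⟩ hi_free
      · exact absurd ⟨D, hD, hjD, drop_i hDsub hiD⟩ hj_free
      · exact .inr ⟨hiD, hjD⟩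
  · rintro ⟨⟨C, hC, -, hjC, hCsub⟩, hall⟩
    refine ⟨fun ⟨D, hD, hiD, hDsub⟩ => ?_, fun ⟨D, hD, hjD, hDsub⟩ => ?_, C, hC, hjC, hCsub⟩
    · have hjD : j ∉ D := fun h => hjiK (hDsub h)
      have := hall D hD (hDsub.trans (insert_subset_insert i (subset_insert j K)))
      tauto
    · have hiD : i ∉ D := fun h => hijK (hDsub h)
      have := hall D hD (hDsub.trans (subset_insert i _))
      tauto
end

section
/- Let M be a matroid on E, K ⊆ E, and i ≠ j elements of E \ K. If no circuit of M contained in {i,j} ∪ K contains i or j (equivalently, i and j are coloops of the restriction M|({i,j}∪K)), then i ⊥ j | K. -/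
open Finset

/-!
If no circuit through `x ∉ S` lies in `S ∪ {x}`, then `x` raises the rank of `S`: otherwise
an independent `B ⊆ S` with `r B = r S` makes `B ∪ {x}` dependent, and a circuit inside it must
pass through `x`. Applied to `i` over `K` and over `K ∪ {j}`, this gives `r(iK) = r(K) + 1` and
`r(ijK) = r(jK) + 1`, whose sum is the CI equation.
-/

namespace FinMatroid

variable {α : Type*} [DecidableEq α] (M : FinMatroid α) {A B C S : Finset α} {x : α}

lemma r_insert_le_succ (hA : A ⊆ M.E) (hx : x ∈ M.E) : M.r (insert x A) ≤ M.r A + 1 := by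
  have hxE : {x} ⊆ M.E := singleton_subset_iff.mpr hx
  have hx_le : M.r {x} ≤ 1 := by simpa using M.r_le_card hxE
  have := M.r_submod hxE hA
  rw [insert_eq]
  omega

variable {M} in
lemma Indep.subset (hB : M.Indep B) (hCB : C ⊆ B) : M.Indep C := by
  obtain ⟨hBE, hBr⟩ := hB
  have hCE : C ⊆ M.E := hCB.trans hBE
  have hsub := M.r_submod hCE (sdiff_subset.trans hBE : B \ C ⊆ M.E)
  rw [union_sdiff_of_subset hCB, inter_sdiff_self, M.r_empty] at hsub
  have hrest := M.r_le_card (sdiff_subset.trans hBE : B \ C ⊆ M.E)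
  have hcard := card_sdiff_of_subset hCB
  have hCB_card := card_le_card hCB
  exact ⟨hCE, le_antisymm (M.r_le_card hCE) (by omega)⟩

lemma exists_circuit_subset_of_r_lt_card (hA : A ⊆ M.E) (hdep : M.r A < A.card) :
    ∃ C, M.Circuit C ∧ C ⊆ A := by
  induction A using strongInduction with
  | _ A ih =>
  by_cases hmin : ∀ S, S ⊂ A → M.r S = S.card
  · exact ⟨A, ⟨hA, hdep, hmin⟩, Subset.rfl⟩
  · push Not at hmin
    obtain ⟨S, hSA, hS⟩ := hmin
    have hSE : S ⊆ M.E := hSA.subset.trans hA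
    obtain ⟨C, hC, hCS⟩ := ih S hSA hSE (lt_of_le_of_ne (M.r_le_card hSE) hS)
    exact ⟨C, hC, hCS.trans hSA.subset⟩

lemma exists_indep_subset_r_eq (hS : S ⊆ M.E) : ∃ B ⊆ S, M.Indep B ∧ M.r B = M.r S := by
  induction S using Finset.induction_on with
  | empty => exact ⟨∅, Subset.rfl, ⟨empty_subset _, by simp [M.r_empty]⟩, rfl⟩
  | insert a S haS ih =>
    have hSE : S ⊆ M.E := (subset_insert a S).trans hS
    have haE : a ∈ M.E := hS (mem_insert_self a S)
    obtain ⟨B, hBS, hB, hBr⟩ := ih hSE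
    have hle := M.r_insert_le_succ hSE haE
    have hge := M.r_mono (subset_insert a S) hS
    rcases (by omega : M.r (insert a S) = M.r S ∨ M.r (insert a S) = M.r S + 1) with h | h
    · exact ⟨B, hBS.trans (subset_insert a S), hB, hBr.trans h.symm⟩
    · have haB : a ∉ B := fun ha => haS (hBS ha)
      have haBE : insert a B ⊆ M.E := insert_subset haE (hBS.trans hSE)
      -- submodularity against `S` shows that `a` also raises the rank of `B`
      have hsub := M.r_submod haBE hSE
      rw [insert_union, union_eq_right.mpr hBS, insert_inter_of_notMem haS,
        inter_eq_left.mpr hBS] at hsub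
      have hcard := M.r_le_card haBE
      rw [card_insert_of_notMem haB] at hcard
      have hB_card := hB.2
      refine ⟨insert a B, insert_subset_insert a hBS, ⟨haBE, ?_⟩, by omega⟩
      rw [card_insert_of_notMem haB]
      omega

lemma exists_circuit_mem_of_r_insert_eq (hS : S ⊆ M.E) (hx : x ∈ M.E) (hxS : x ∉ S)
    (h : M.r (insert x S) = M.r S) : ∃ C, M.Circuit C ∧ C ⊆ insert x S ∧ x ∈ C := by
  obtain ⟨B, hBS, hB, hBr⟩ := M.exists_indep_subset_r_eq hS
  have hxB : x ∉ B := fun hx => hxS (hBS hx)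
  have hxBE : insert x B ⊆ M.E := insert_subset hx (hBS.trans hS)
  have hmono := M.r_mono (insert_subset_insert x hBS) (insert_subset hx hS)
  have hdep : M.r (insert x B) < (insert x B).card := by
    rw [card_insert_of_notMem hxB]
    have hB_card := hB.2
    omega
  obtain ⟨C, hC, hCsub⟩ := M.exists_circuit_subset_of_r_lt_card hxBE hdep
  refine ⟨C, hC, hCsub.trans (insert_subset_insert x hBS), ?_⟩
  by_contra hxC
  have hCB : C ⊆ B := (subset_insert_iff_of_notMem hxC).mp hCsub
  exact hC.2.1.ne (hB.subset hCB).2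

lemma r_insert_eq_succ_of_forall_circuit_notMem (hS : S ⊆ M.E) (hx : x ∈ M.E) (hxS : x ∉ S)
    (h : ∀ C, M.Circuit C → C ⊆ insert x S → x ∉ C) : M.r (insert x S) = M.r S + 1 := by
  have hle := M.r_insert_le_succ hS hx
  have hge := M.r_mono (subset_insert x S) (insert_subset hx hS)
  by_contra hne
  obtain ⟨C, hC, hCsub, hxC⟩ := M.exists_circuit_mem_of_r_insert_eq hS hx hxS (by omega)
  exact h C hC hCsub hxC

end FinMatroid

theorem CI_of_no_circuit_general {α : Type*} [DecidableEq α] (M : FinMatroid α)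
    (i j : α) (K : Finset α)
    (hK : K ⊆ M.E) (hi : i ∈ M.E) (hj : j ∈ M.E) (hij : i ≠ j)
    (hiK : i ∉ K)
    (hC : ∀ C, M.Circuit C → C ⊆ insert i (insert j K) → i ∉ C ∧ j ∉ C) :
    M.CI i j K := by
  have hiC : ∀ C, M.Circuit C → C ⊆ insert i (insert j K) → i ∉ C :=
    fun C hCirc hCsub => (hC C hCirc hCsub).1
  have hiK_coloop : M.r (insert i K) = M.r K + 1 :=
    M.r_insert_eq_succ_of_forall_circuit_notMem hK hi hiK
      fun C hCirc hCsub => hiC C hCirc (hCsub.trans (insert_subset_insert _ (subset_insert _ _)))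
  have hijK_coloop : M.r (insert i (insert j K)) = M.r (insert j K) + 1 :=
    M.r_insert_eq_succ_of_forall_circuit_notMem (insert_subset hj hK) hi
      (by simp [hij, hiK]) hiC
  unfold FinMatroid.CI
  omega

/-- if no circuit contained in `{i,j} ∪ K` contains `i` or `j`
(i.e. `i` and `j` are coloops of the restriction to `{i,j} ∪ K`),
then `i ⊥ j | K`. -/
theorem CI_of_no_circuit {α : Type*} [DecidableEq α] (M : FinMatroid α)
    (i j : α) (K : Finset α)
    (hK : K ⊆ M.E) (hi : i ∈ M.E) (hj : j ∈ M.E) (hij : i ≠ j)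
    (hiK : i ∉ K) (hjK : j ∉ K)
    (hC : ∀ C, M.Circuit C → C ⊆ insert i (insert j K) → i ∉ C ∧ j ∉ C) :
    M.CI i j K :=
  CI_of_no_circuit_general M i j K hK hi hj hij hiK hC
end

section
/- Let M be a matroid on E, K ⊆ E, and i ≠ j elements of E \ K. Then i ⊥̸ j | K if and only if for every basis B of K (i.e. every maximal independent subset of K), both B ∪ {i} and B ∪ {j} are bases of {i,j} ∪ K. -/
open Finset

namespace FinMatroid

variable {α : Type*} [DecidableEq α]

lemma r_insert_le_s6 (M : FinMatroid α) {A : Finset α} (hA : A ⊆ M.E) {x : α}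
    (hx : x ∈ M.E) : M.r (insert x A) ≤ M.r A + 1 := by
  have h := M.r_submod (A := {x}) (B := A) (by simpa using hx) hA
  have h1 : M.r {x} ≤ 1 := by simpa using M.r_le_card (A := {x}) (by simpa using hx)
  have h2 : ({x} : Finset α) ∪ A = insert x A := by
    ext y; simp [or_comm]
  rw [h2] at h
  omega

lemma r_le_of_spanning (M : FinMatroid α) {A S : Finset α} (hAS : A ⊆ S)
    (hS : S ⊆ M.E) (h : ∀ x ∈ S, M.r (insert x A) ≤ M.r A) : M.r S ≤ M.r A := by
  have key : ∀ T : Finset α, T ⊆ S → M.r (A ∪ T) ≤ M.r A := by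
    intro T
    induction T using Finset.induction_on with
    | empty => intro _; simp
    | @insert x T hxT ih =>
      intro hsub
      have hTS : T ⊆ S := (Finset.subset_insert x T).trans hsub
      have hxS : x ∈ S := hsub (Finset.mem_insert_self x T)
      have hsub1 : A ∪ T ⊆ M.E := Finset.union_subset (hAS.trans hS) (hTS.trans hS)
      have hsub2 : insert x A ⊆ M.E := Finset.insert_subset (hS hxS) (hAS.trans hS)
      have hsm := M.r_submod hsub1 hsub2
      have hun : (A ∪ T) ∪ insert x A = A ∪ insert x T := by
        ext y; simp; tauto
      have hint : A ⊆ (A ∪ T) ∩ insert x A := by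
        intro y hy; simp [hy]
      have hintE : (A ∪ T) ∩ insert x A ⊆ M.E :=
        (Finset.inter_subset_left).trans hsub1
      have h3 : M.r A ≤ M.r ((A ∪ T) ∩ insert x A) := M.r_mono hint hintE
      rw [hun] at hsm
      have h4 := ih hTS
      have h5 := h x hxS
      omega
  have := key S Finset.Subset.rfl
  rwa [Finset.union_eq_right.mpr hAS] at this

lemma basisOf_rank (M : FinMatroid α) {B S : Finset α} (hB : M.BasisOf B S)
    (hS : S ⊆ M.E) : M.r S = B.card := by
  obtain ⟨hBS, ⟨hBE, hBr⟩, hmax⟩ := hB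
  have h1 : M.r S ≤ M.r B := by
    apply M.r_le_of_spanning hBS hS
    intro x hxS
    by_cases hxB : x ∈ B
    · rw [Finset.insert_eq_self.mpr hxB]
    · have hne := hmax x hxS hxB
      have hle : M.r (insert x B) ≤ M.r B + 1 := M.r_insert_le_s6 hBE (hS hxS)
      have hge : M.r B ≤ M.r (insert x B) :=
        M.r_mono (Finset.subset_insert x B) (Finset.insert_subset (hS hxS) hBE)
      have hcard : (insert x B).card = B.card + 1 := Finset.card_insert_of_notMem hxB
      have : M.r (insert x B) ≠ B.card + 1 := by
        intro hc
        exact hne ⟨Finset.insert_subset (hS hxS) hBE, by rw [hc, hcard]⟩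
      omega
  have h2 : M.r B ≤ M.r S := M.r_mono hBS hS
  omega

lemma exists_basisOf (M : FinMatroid α) {S : Finset α} (hS : S ⊆ M.E) :
    ∃ B, M.BasisOf B S := by
  classical
  have hne : (S.powerset.filter M.Indep).Nonempty := by
    refine ⟨∅, ?_⟩
    simp [FinMatroid.Indep, M.r_empty]
  obtain ⟨B, hBmem, hBmax⟩ := Finset.exists_max_image _ Finset.card hne
  simp only [Finset.mem_filter, Finset.mem_powerset] at hBmem
  refine ⟨B, hBmem.1, hBmem.2, ?_⟩
  intro x hxS hxB hind
  have hmem : insert x B ∈ S.powerset.filter M.Indep := by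
    simp only [Finset.mem_filter, Finset.mem_powerset]
    exact ⟨Finset.insert_subset hxS hBmem.1, hind⟩
  have := hBmax _ hmem
  rw [Finset.card_insert_of_notMem hxB] at this
  omega

end FinMatroid

/-- `i ⊥̸ j | K` iff for every basis `B` of `K`, both
`B ∪ {i}` and `B ∪ {j}` are bases of `{i,j} ∪ K`. -/
theorem not_CI_iff_forall_bases {α : Type*} [DecidableEq α] (M : FinMatroid α)
    (i j : α) (K : Finset α)
    (hK : K ⊆ M.E) (hi : i ∈ M.E) (hj : j ∈ M.E) (hij : i ≠ j)
    (hiK : i ∉ K) (hjK : j ∉ K) :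
    (¬ M.CI i j K) ↔
      (∀ B, M.BasisOf B K →
        M.BasisOf (insert i B) (insert i (insert j K)) ∧
        M.BasisOf (insert j B) (insert i (insert j K))) := by
  set iK := insert i K with hiKdef
  set jK := insert j K with hjKdef
  set ijK := insert i (insert j K) with hijKdef
  have hiKE : iK ⊆ M.E := Finset.insert_subset hi hK
  have hjKE : jK ⊆ M.E := Finset.insert_subset hj hK
  have hijKE : ijK ⊆ M.E := Finset.insert_subset hi hjKE
  have hun : iK ∪ jK = ijK := by
    ext y; simp [hiKdef, hjKdef, hijKdef]; tauto
  have hint : iK ∩ jK = K := by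
    ext y
    simp only [hiKdef, hjKdef, Finset.mem_inter, Finset.mem_insert]
    constructor
    · rintro ⟨hy1 | hy1, hy2 | hy2⟩ <;> first | assumption | (exfalso; subst hy1; first | exact hij hy2 | exact hiK ‹_›) | (exfalso; subst hy2; exact hjK hy1)
    · intro hy; exact ⟨Or.inr hy, Or.inr hy⟩
  have hsubm : M.r ijK + M.r K ≤ M.r iK + M.r jK := by
    have := M.r_submod hiKE hjKE
    rwa [hun, hint] at this
  have hri : M.r iK ≤ M.r K + 1 := M.r_insert_le_s6 hK hi
  have hrj : M.r jK ≤ M.r K + 1 := M.r_insert_le_s6 hK hj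
  have hriK : M.r K ≤ M.r iK := M.r_mono (Finset.subset_insert _ _) hiKE
  have hrjK : M.r K ≤ M.r jK := M.r_mono (Finset.subset_insert _ _) hjKE
  have hrij1 : M.r iK ≤ M.r ijK := by
    apply M.r_mono _ hijKE
    intro y hy
    simp only [hiKdef, hijKdef, Finset.mem_insert] at *
    tauto
  have hrij2 : M.r jK ≤ M.r ijK := M.r_mono (by
    intro y hy
    simp only [hjKdef, hijKdef, Finset.mem_insert] at *
    tauto) hijKE
  constructor
  · intro hCI B hB
    -- from ¬CI derive the three rank equalities
    have hne : M.r iK + M.r jK ≠ M.r ijK + M.r K := hCI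
    have hriE : M.r iK = M.r K + 1 := by omega
    have hrjE : M.r jK = M.r K + 1 := by omega
    have hrijE : M.r ijK = M.r K + 1 := by omega
    obtain ⟨hBK, ⟨hBE, hBr⟩, hmax⟩ := hB
    have hrKB : M.r K = B.card := M.basisOf_rank ⟨hBK, ⟨hBE, hBr⟩, hmax⟩ hK
    have hiB : i ∉ B := fun h => hiK (hBK h)
    have hjB : j ∉ B := fun h => hjK (hBK h)
    have hBijK : B ⊆ ijK := hBK.trans ((Finset.subset_insert _ _).trans (Finset.subset_insert _ _))
    -- generic claim for an element e with r(insert e K) = r K + 1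
    have main : ∀ e, e ∈ M.E → e ∉ K → M.r (insert e K) = M.r K + 1 →
        e ∈ ijK → M.BasisOf (insert e B) ijK := by
      intro e heE heK hre heij
      have heB : e ∉ B := fun h => heK (hBK h)
      have heBE : insert e B ⊆ M.E := Finset.insert_subset heE hBE
      have hcard : (insert e B).card = B.card + 1 := Finset.card_insert_of_notMem heB
      have hunion : insert e B ∪ K = insert e K := by
        ext y; simp
        constructor
        · rintro (h | h | h)
          · exact Or.inl h
          · exact Or.inr (hBK h)
          · exact Or.inr h
        · tauto
      have hinter : insert e B ∩ K = B := by
        ext y; simp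
        constructor
        · rintro ⟨h1 | h1, h2⟩
          · exact absurd (h1 ▸ h2) heK
          · exact h1
        · intro h; exact ⟨Or.inr h, hBK h⟩
      have hsm := M.r_submod heBE hK
      rw [hunion, hinter] at hsm
      have hrle : M.r (insert e B) ≤ B.card + 1 := by
        have := M.r_le_card heBE; omega
      have hrge : B.card + 1 ≤ M.r (insert e B) := by omega
      have hind : M.Indep (insert e B) := ⟨heBE, by omega⟩
      refine ⟨Finset.insert_subset heij hBijK, hind, ?_⟩
      intro x hx hxe hcon
      obtain ⟨hcE, hcr⟩ := hcon
      have hxeB : x ∉ insert e B := hxe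
      have hccard : (insert x (insert e B)).card = B.card + 2 := by
        rw [Finset.card_insert_of_notMem hxeB, hcard]
      have hsub : insert x (insert e B) ⊆ ijK :=
        Finset.insert_subset hx (Finset.insert_subset heij hBijK)
      have := M.r_mono hsub hijKE
      omega
    constructor
    · exact main i hi hiK hriE (Finset.mem_insert_self _ _)
    · exact main j hj hjK hrjE (by simp [hijKdef])
  · intro h hCI
    obtain ⟨B, hB⟩ := M.exists_basisOf hK
    obtain ⟨hBi, hBj⟩ := h B hB
    have hrKB : M.r K = B.card := M.basisOf_rank hB hK
    have hiB : i ∉ B := fun hh => hiK (hB.1 hh)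
    have hjB : j ∉ B := fun hh => hjK (hB.1 hh)
    have hrijB : M.r ijK = B.card + 1 := by
      have := M.basisOf_rank hBi hijKE
      rwa [Finset.card_insert_of_notMem hiB] at this
    have hriB : M.r (insert i B) = B.card + 1 := by
      have := hBi.2.1.2
      rwa [Finset.card_insert_of_notMem hiB] at this
    have hrjB : M.r (insert j B) = B.card + 1 := by
      have := hBj.2.1.2
      rwa [Finset.card_insert_of_notMem hjB] at this
    have h1 : M.r (insert i B) ≤ M.r iK := by
      apply M.r_mono _ hiKE
      exact Finset.insert_subset_insert _ hB.1
    have h2 : M.r (insert j B) ≤ M.r jK := by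
      apply M.r_mono _ hjKE
      exact Finset.insert_subset_insert _ hB.1
    have : M.r iK + M.r jK = M.r ijK + M.r K := hCI
    omega
end

section
/- Let M be a matroid on E, K ⊆ E, and i ≠ j elements of E \ K. Then i ⊥̸ j | K if and only if there exists a basis B of K such that both B ∪ {i} and B ∪ {j} are bases of {i,j} ∪ K. -/
open Finset

namespace FinMatroid

variable {α : Type*} [DecidableEq α] (M : FinMatroid α)

lemma aux_r_insert_le {A : Finset α} {x : α} (hA : A ⊆ M.E) (hx : x ∈ M.E) :
    M.r (insert x A) ≤ M.r A + 1 := by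
  have h := M.r_submod (A := A) (B := {x}) hA (by simpa using hx)
  have h1 : A ∪ {x} = insert x A := by ext a; simp [or_comm]
  have h2 : M.r {x} ≤ 1 := by simpa using M.r_le_card (A := {x}) (by simpa using hx)
  rw [h1] at h
  omega

lemma aux_r_union_eq {A : Finset α} (hA : A ⊆ M.E) :
    ∀ T : Finset α, T ⊆ M.E → (∀ x ∈ T, M.r (insert x A) = M.r A) →
      M.r (A ∪ T) = M.r A := by
  intro T
  induction T using Finset.induction_on with
  | empty => simp
  | @insert y T hyT ih =>
    intro hT hloc
    have hTE : T ⊆ M.E := (Finset.subset_insert y T).trans hT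
    have hIH : M.r (A ∪ T) = M.r A :=
      ih hTE (fun x hx => hloc x (Finset.mem_insert_of_mem hx))
    have hyE : insert y A ⊆ M.E :=
      Finset.insert_subset (hT (Finset.mem_insert_self y T)) hA
    have hATE : A ∪ T ⊆ M.E := Finset.union_subset hA hTE
    have hsub := M.r_submod hATE hyE
    have hu : (A ∪ T) ∪ insert y A = insert y (A ∪ T) := by
      ext a; simp; try tauto
    have hi : A ⊆ (A ∪ T) ∩ insert y A := by
      intro a ha
      simp [ha]
    have hmono : M.r A ≤ M.r ((A ∪ T) ∩ insert y A) :=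
      M.r_mono hi ((Finset.inter_subset_left).trans hATE)
    rw [hu, hIH, hloc y (Finset.mem_insert_self y T)] at hsub
    have hAu : A ∪ insert y T = insert y (A ∪ T) := by
      ext a; simp; try tauto
    have hge : M.r A ≤ M.r (A ∪ insert y T) :=
      M.r_mono Finset.subset_union_left (Finset.union_subset hA hT)
    rw [hAu]
    rw [hAu] at hge
    omega

lemma aux_basis_card {B S : Finset α} (hS : S ⊆ M.E) (h : M.BasisOf B S) :
    M.r S = B.card := by
  obtain ⟨hBS, ⟨hBE, hBr⟩, hmax⟩ := h
  have key : ∀ x ∈ S, M.r (insert x B) = M.r B := by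
    intro x hx
    by_cases hxB : x ∈ B
    · rw [Finset.insert_eq_self.2 hxB]
    · have hne := hmax x hx hxB
      have hsub : insert x B ⊆ M.E := Finset.insert_subset (hS hx) hBE
      have h1 := M.r_le_card hsub
      have h2 : M.r (insert x B) ≠ (insert x B).card := fun hc => hne ⟨hsub, hc⟩
      have h3 : M.r B ≤ M.r (insert x B) := M.r_mono (Finset.subset_insert _ _) hsub
      rw [Finset.card_insert_of_notMem hxB] at h1 h2
      omega
  have h4 := M.aux_r_union_eq hBE S hS key
  rwa [Finset.union_eq_right.2 hBS, hBr] at h4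

lemma aux_exists_basis {S : Finset α} (hS : S ⊆ M.E) : ∃ B, M.BasisOf B S := by
  classical
  set I := S.powerset.filter (fun B => M.r B = B.card) with hI
  have hne : I.Nonempty := ⟨∅, by simp [hI, M.r_empty]⟩
  obtain ⟨B, hBI, hBmax⟩ := I.exists_max_image Finset.card hne
  simp only [hI, Finset.mem_filter, Finset.mem_powerset] at hBI
  refine ⟨B, hBI.1, ⟨hBI.1.trans hS, hBI.2⟩, ?_⟩
  intro x hx hxB ⟨hsub, hcard⟩
  have hmem : insert x B ∈ I := by
    simp only [hI, Finset.mem_filter, Finset.mem_powerset]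
    exact ⟨Finset.insert_subset hx hBI.1, hcard⟩
  have := hBmax _ hmem
  rw [Finset.card_insert_of_notMem hxB] at this
  omega

end FinMatroid

/-- `i ⊥̸ j | K` iff there exists a basis `B` of `K` such that
both `B ∪ {i}` and `B ∪ {j}` are bases of `{i,j} ∪ K`. -/
theorem not_CI_iff_exists_basis {α : Type*} [DecidableEq α] (M : FinMatroid α)
    (i j : α) (K : Finset α)
    (hK : K ⊆ M.E) (hi : i ∈ M.E) (hj : j ∈ M.E) (hij : i ≠ j)
    (hiK : i ∉ K) (hjK : j ∉ K) :
    (¬ M.CI i j K) ↔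
      (∃ B, M.BasisOf B K ∧
        M.BasisOf (insert i B) (insert i (insert j K)) ∧
        M.BasisOf (insert j B) (insert i (insert j K))) := by
  have hiKE : insert i K ⊆ M.E := Finset.insert_subset hi hK
  have hjKE : insert j K ⊆ M.E := Finset.insert_subset hj hK
  have hijKE : insert i (insert j K) ⊆ M.E := Finset.insert_subset hi hjKE
  have hu : insert i K ∪ insert j K = insert i (insert j K) := by ext a; simp; try tauto
  have hinter : insert i K ∩ insert j K = K := by
    ext a
    simp only [Finset.mem_inter, Finset.mem_insert]
    constructor
    · rintro ⟨hi' | hi', hj' | hj'⟩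
      · exact absurd (hi'.symm.trans hj') hij
      · subst hi'; exact absurd hj' hiK
      · subst hj'; exact absurd hi' hjK
      · exact hi'
    · intro h; exact ⟨Or.inr h, Or.inr h⟩
  have hsubmod := M.r_submod hiKE hjKE
  rw [hu, hinter] at hsubmod
  have hmonoI : M.r K ≤ M.r (insert i K) := M.r_mono (Finset.subset_insert _ _) hiKE
  have hmonoJ : M.r K ≤ M.r (insert j K) := M.r_mono (Finset.subset_insert _ _) hjKE
  have hleI : M.r (insert i K) ≤ M.r K + 1 := M.aux_r_insert_le hK hi
  have hleJ : M.r (insert j K) ≤ M.r K + 1 := M.aux_r_insert_le hK hj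
  have hmonoIJ : M.r (insert i K) ≤ M.r (insert i (insert j K)) :=
    M.r_mono (Finset.insert_subset_insert i (Finset.subset_insert _ _)) hijKE
  have hmonoJI : M.r (insert j K) ≤ M.r (insert i (insert j K)) :=
    M.r_mono (Finset.subset_insert _ _) hijKE
  constructor
  · intro hCI
    unfold FinMatroid.CI at hCI
    -- derive ranks
    have hrI : M.r (insert i K) = M.r K + 1 := by omega
    have hrJ : M.r (insert j K) = M.r K + 1 := by omega
    have hrIJ : M.r (insert i (insert j K)) = M.r K + 1 := by omega
    obtain ⟨B, hB⟩ := M.aux_exists_basis hK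
    have hcard : M.r K = B.card := M.aux_basis_card hK hB
    obtain ⟨hBK, ⟨hBE, hBr⟩, _⟩ := hB
    have hiB : i ∉ B := fun h => hiK (hBK h)
    have hjB : j ∉ B := fun h => hjK (hBK h)
    have hBijK : B ⊆ insert i (insert j K) :=
      hBK.trans ((Finset.subset_insert _ _).trans (Finset.subset_insert _ _))
    have key : ∀ x ∈ ({i, j} : Finset α), M.BasisOf (insert x B)
        (insert i (insert j K)) := by
      intro x hx
      have hxE : x ∈ M.E := by
        rcases Finset.mem_insert.1 hx with h | h
        · subst h; exact hi
        · simp only [Finset.mem_singleton] at h; subst h; exact hj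
      have hxK : x ∉ K := by
        rcases Finset.mem_insert.1 hx with h | h
        · subst h; exact hiK
        · simp only [Finset.mem_singleton] at h; subst h; exact hjK
      have hxB : x ∉ B := fun h => hxK (hBK h)
      have hrxK : M.r (insert x K) = M.r K + 1 := by
        rcases Finset.mem_insert.1 hx with h | h
        · subst h; exact hrI
        · simp only [Finset.mem_singleton] at h; subst h; exact hrJ
      have hxBE : insert x B ⊆ M.E := Finset.insert_subset hxE hBE
      -- rank of insert x B is |B| + 1
      have hsub2 := M.r_submod hxBE hK
      have hu2 : insert x B ∪ K = insert x K := by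
        rw [Finset.insert_union, Finset.union_eq_right.2 hBK]
      have hi2 : insert x B ∩ K = B := by
        ext a
        simp only [Finset.mem_inter, Finset.mem_insert]
        constructor
        · rintro ⟨h | h, haK⟩
          · subst h; exact absurd haK hxK
          · exact h
        · intro h; exact ⟨Or.inr h, hBK h⟩
      rw [hu2, hi2, hrxK, hBr, hcard] at hsub2
      have hle2 : M.r (insert x B) ≤ (insert x B).card := M.r_le_card hxBE
      rw [Finset.card_insert_of_notMem hxB] at hle2
      have hIndep : M.Indep (insert x B) := by
        refine ⟨hxBE, ?_⟩
        rw [Finset.card_insert_of_notMem hxB]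
        omega
      have hxBsub : insert x B ⊆ insert i (insert j K) := by
        refine Finset.insert_subset ?_ hBijK
        rcases Finset.mem_insert.1 hx with h | h
        · subst h; exact Finset.mem_insert_self _ _
        · simp only [Finset.mem_singleton] at h; subst h
          exact Finset.mem_insert_of_mem (Finset.mem_insert_self _ _)
      refine ⟨hxBsub, hIndep, ?_⟩
      intro y hy hyxB ⟨hysub, hycard⟩
      have hmono3 : M.r (insert y (insert x B)) ≤ M.r (insert i (insert j K)) :=
        M.r_mono (Finset.insert_subset hy hxBsub) hijKE
      rw [hycard, Finset.card_insert_of_notMem hyxB,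
        Finset.card_insert_of_notMem hxB] at hmono3
      omega
    exact ⟨B, ⟨hBK, ⟨hBE, hBr⟩, by
      intro x hx hxB hInd
      obtain ⟨hBK', hB'⟩ := key i (Finset.mem_insert_self _ _)
      -- re-derive contradiction: insert x B indep with x ∈ K contradicts maximality
      -- use rank: r (insert x B) = |B|+1 but insert x B ⊆ K so r ≤ r K = |B|
      obtain ⟨hsub', hcard'⟩ := hInd
      have : M.r (insert x B) ≤ M.r K := M.r_mono (Finset.insert_subset hx hBK) hK
      rw [hcard', Finset.card_insert_of_notMem hxB] at this
      omega⟩,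
      key i (Finset.mem_insert_self _ _),
      key j (by simp)⟩
  · rintro ⟨B, hB, hBi, hBj⟩
    have hcard : M.r K = B.card := M.aux_basis_card hK hB
    obtain ⟨hBK, ⟨hBE, hBr⟩, _⟩ := hB
    have hiB : i ∉ B := fun h => hiK (hBK h)
    have hjB : j ∉ B := fun h => hjK (hBK h)
    have hrIJ : M.r (insert i (insert j K)) = B.card + 1 := by
      rw [M.aux_basis_card hijKE hBi, Finset.card_insert_of_notMem hiB]
    have hiBsub : insert i B ⊆ insert i K := Finset.insert_subset_insert i hBK
    have hjBsub : insert j B ⊆ insert j K := Finset.insert_subset_insert j hBK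
    have hrI' : B.card + 1 ≤ M.r (insert i K) := by
      have h1 : M.r (insert i B) ≤ M.r (insert i K) := M.r_mono hiBsub hiKE
      obtain ⟨hsub', hcard'⟩ := hBi.2.1
      rw [hcard', Finset.card_insert_of_notMem hiB] at h1
      exact h1
    have hrJ' : B.card + 1 ≤ M.r (insert j K) := by
      have h1 : M.r (insert j B) ≤ M.r (insert j K) := M.r_mono hjBsub hjKE
      obtain ⟨hsub', hcard'⟩ := hBj.2.1
      rw [hcard', Finset.card_insert_of_notMem hjB] at h1
      exact h1
    intro hCI
    unfold FinMatroid.CI at hCI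
    omega
end

section
/- Let M be a matroid on E, K ⊆ E, and i ≠ j elements of E \ K. Then i ⊥̸ j | K if and only if {i,j} is a cocircuit of the restriction of M to {i,j} ∪ K (equivalently, K is a hyperplane of M restricted to {i,j} ∪ K). -/
open Finset

/-- Restriction of a matroid to a subset `T` of its ground set. -/
def FinMatroid.restrict {α : Type*} [DecidableEq α] (M : FinMatroid α)
    (T : Finset α) (hT : T ⊆ M.E) : FinMatroid α where
  E := T
  r := M.r
  r_empty := M.r_empty
  r_le_card := fun _ hA => M.r_le_card (hA.trans hT)
  r_mono := fun _ _ h hB => M.r_mono h (hB.trans hT)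
  r_submod := fun _ _ hA hB => M.r_submod (hA.trans hT) (hB.trans hT)

/-- A cocircuit of a matroid: a circuit of the dual, described via the rank
function: `D ⊆ E` is a minimal set with `r(E \ D) < r(E)`. -/
def FinMatroid.Cocircuit {α : Type*} [DecidableEq α] (M : FinMatroid α)
    (D : Finset α) : Prop :=
  D ⊆ M.E ∧ M.r (M.E \ D) < M.r M.E ∧ ∀ S, S ⊂ D → M.r (M.E \ S) = M.r M.E

/-- `i ⊥̸ j | K` iff `{i,j}` is a cocircuit of the restriction
of `M` to `{i,j} ∪ K`. -/
theorem not_CI_iff_cocircuit {α : Type*} [DecidableEq α] (M : FinMatroid α)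
    (i j : α) (K : Finset α)
    (hK : K ⊆ M.E) (hi : i ∈ M.E) (hj : j ∈ M.E) (hij : i ≠ j)
    (hiK : i ∉ K) (hjK : j ∉ K) :
    (¬ M.CI i j K) ↔
      (M.restrict (insert i (insert j K))
          (Finset.insert_subset hi (Finset.insert_subset hj hK))).Cocircuit
        {i, j} := by
  set T : Finset α := insert i (insert j K) with hT
  have hTE : T ⊆ M.E := Finset.insert_subset hi (Finset.insert_subset hj hK)
  -- set identities
  have hdij : T \ {i, j} = K := by
    ext x
    simp only [hT, Finset.mem_sdiff, Finset.mem_insert, Finset.mem_singleton]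
    constructor
    · rintro ⟨h1 | h1 | h1, h2⟩ <;> tauto
    · intro hx
      refine ⟨Or.inr (Or.inr hx), ?_⟩
      rintro (rfl | rfl) <;> [exact hiK hx; exact hjK hx]
  have hdi : T \ {i} = insert j K := by
    ext x
    simp only [hT, Finset.mem_sdiff, Finset.mem_insert, Finset.mem_singleton]
    constructor
    · rintro ⟨h1 | h1 | h1, h2⟩ <;> tauto
    · rintro (rfl | hx)
      · exact ⟨Or.inr (Or.inl rfl), fun h => hij h.symm⟩
      · exact ⟨Or.inr (Or.inr hx), fun h => hiK (h ▸ hx)⟩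
  have hdj : T \ {j} = insert i K := by
    ext x
    simp only [hT, Finset.mem_sdiff, Finset.mem_insert, Finset.mem_singleton]
    constructor
    · rintro ⟨h1 | h1 | h1, h2⟩ <;> tauto
    · rintro (rfl | hx)
      · exact ⟨Or.inl rfl, hij⟩
      · exact ⟨Or.inr (Or.inr hx), fun h => hjK (h ▸ hx)⟩
  have hiT : insert i K ⊆ T := by
    intro x hx
    rcases Finset.mem_insert.mp hx with rfl | hx
    · exact Finset.mem_insert_self _ _
    · exact Finset.mem_insert_of_mem (Finset.mem_insert_of_mem hx)
  have hjT : insert j K ⊆ T := Finset.subset_insert _ _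
  have hiKE : insert i K ⊆ M.E := hiT.trans hTE
  have hjKE : insert j K ⊆ M.E := hjT.trans hTE
  -- rank facts
  have hsub : M.r T + M.r K ≤ M.r (insert i K) + M.r (insert j K) := by
    have hu : insert i K ∪ insert j K = T := by
      ext x
      simp only [hT, Finset.mem_union, Finset.mem_insert]
      tauto
    have hin : insert i K ∩ insert j K = K := by
      ext x
      simp only [Finset.mem_inter, Finset.mem_insert]
      constructor
      · rintro ⟨rfl | h1, h2 | h2⟩ <;> first
        | assumption
        | (exact absurd rfl hij) | (exact absurd h2 hij.symm) | tauto
      · tauto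
    have := M.r_submod hiKE hjKE
    rwa [hu, hin] at this
  have hmi : M.r (insert i K) ≤ M.r T := M.r_mono hiT hTE
  have hmj : M.r (insert j K) ≤ M.r T := M.r_mono hjT hTE
  have hKi : M.r K ≤ M.r (insert i K) := M.r_mono (Finset.subset_insert _ _) hiKE
  have hKj : M.r K ≤ M.r (insert j K) := M.r_mono (Finset.subset_insert _ _) hjKE
  have step : ∀ x ∈ M.E, x ∉ K → M.r (insert x K) ≤ M.r K + 1 := by
    intro x hx hxK
    have h1 : ({x} : Finset α) ∪ K = insert x K := by
      ext y; simp [Finset.mem_union, Finset.mem_insert]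
    have h2 : ({x} : Finset α) ∩ K = ∅ := by
      ext y
      simp only [Finset.mem_inter, Finset.mem_singleton, Finset.notMem_empty,
        iff_false, not_and]
      rintro rfl; exact hxK
    have h3 : M.r {x} ≤ 1 := by
      have := M.r_le_card (A := {x}) (by simpa using hx)
      simpa using this
    have := M.r_submod (A := {x}) (B := K) (by simpa using hx) hK
    rw [h1, h2, M.r_empty] at this
    omega
  have hstepi := step i hi hiK
  have hstepj := step j hj hjK
  constructor
  · intro hci
    have hlt : M.r T + M.r K < M.r (insert i K) + M.r (insert j K) := by
      rcases lt_or_eq_of_le hsub with h | h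
      · exact h
      · exact absurd h.symm hci
    refine ⟨?_, ?_, ?_⟩
    · intro x hx
      rcases Finset.mem_insert.mp hx with rfl | hx
      · exact Finset.mem_insert_self _ _
      · rw [Finset.mem_singleton] at hx
        exact hx ▸ Finset.mem_insert_of_mem (Finset.mem_insert_self _ _)
    · show M.r (T \ {i, j}) < M.r T
      rw [hdij]; omega
    · intro S hS
      have hScases : S = ∅ ∨ S = {i} ∨ S = {j} := by
        have hSsub : S ⊆ {i, j} := hS.subset
        have hSne : S ≠ {i, j} := hS.ne
        by_cases hiS : i ∈ S <;> by_cases hjS : j ∈ S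
        · exact absurd (Finset.Subset.antisymm hSsub
            (Finset.insert_subset hiS (Finset.singleton_subset_iff.mpr hjS))) hSne
        · refine Or.inr (Or.inl (Finset.Subset.antisymm ?_
            (Finset.singleton_subset_iff.mpr hiS)))
          intro x hx
          rcases Finset.mem_insert.mp (hSsub hx) with rfl | hx'
          · exact Finset.mem_singleton_self _
          · rw [Finset.mem_singleton] at hx'; exact absurd (hx' ▸ hx) hjS
        · refine Or.inr (Or.inr (Finset.Subset.antisymm ?_
            (Finset.singleton_subset_iff.mpr hjS)))
          intro x hx
          rcases Finset.mem_insert.mp (hSsub hx) with rfl | hx'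
          · exact absurd hx hiS
          · exact hx'
        · refine Or.inl (Finset.eq_empty_of_forall_notMem fun x hx => ?_)
          rcases Finset.mem_insert.mp (hSsub hx) with rfl | hx'
          · exact hiS hx
          · rw [Finset.mem_singleton] at hx'; exact hjS (hx' ▸ hx)
      show M.r (T \ S) = M.r T
      rcases hScases with rfl | rfl | rfl
      · rw [Finset.sdiff_empty]
      · rw [hdi]; omega
      · rw [hdj]; omega
  · rintro ⟨_, h1, h2⟩
    have h1' : M.r K < M.r T := by
      have : M.r (T \ {i, j}) < M.r T := h1
      rwa [hdij] at this
    have hsi : ({i} : Finset α) ⊂ {i, j} := by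
      constructor
      · exact Finset.singleton_subset_iff.mpr (Finset.mem_insert_self _ _)
      · intro h
        have := h (Finset.mem_insert_of_mem (Finset.mem_singleton_self j))
        rw [Finset.mem_singleton] at this
        exact hij this.symm
    have hsj : ({j} : Finset α) ⊂ {i, j} := by
      constructor
      · exact Finset.singleton_subset_iff.mpr
          (Finset.mem_insert_of_mem (Finset.mem_singleton_self j))
      · intro h
        have := h (Finset.mem_insert_self i {j})
        rw [Finset.mem_singleton] at this
        exact hij this
    have e1 : M.r (insert j K) = M.r T := by
      have : M.r (T \ {i}) = M.r T := h2 {i} hsi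
      rwa [hdi] at this
    have e2 : M.r (insert i K) = M.r T := by
      have : M.r (T \ {j}) = M.r T := h2 {j} hsj
      rwa [hdj] at this
    intro hci
    unfold FinMatroid.CI at hci
    rw [← hT] at hci
    omega
end

section
/- If a CI-structure G ⊆ A_E satisfies (MCI): for all disjoint i, j, ℓ, K, L, if (ij|K) ∉ G then (iℓ|jKL) ∈ G, and (SG): if (ij|K) ∈ G and (iℓ|jK) ∈ G then (iℓ|K) ∈ G and (ij|ℓK) ∈ G, then the function r : 2^E → ℕ defined recursively by r(∅) = 0, r({i}) = 1, and r(ijK) = r(iK) + r(jK) − r(K) if (ij|K) ∈ G, r(ijK) = r(iK) + r(jK) − r(K) − 1 if (ij|K) ∉ G, is well-defined (independent of the order of recursion) and is the rank function of a loopless matroid on E. -/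
open Finset

/-- Well-formedness of the data `i, j, ℓ, K` of an inference-rule instance:
`i, j, ℓ` are pairwise distinct elements of `E` and `K ⊆ E` is disjoint
from them. -/
def wf3 {α : Type*} [DecidableEq α] (E : Finset α) (i j ℓ : α) (K : Finset α) : Prop :=
  i ∈ E ∧ j ∈ E ∧ ℓ ∈ E ∧ i ≠ j ∧ i ≠ ℓ ∧ j ≠ ℓ ∧
    i ∉ K ∧ j ∉ K ∧ ℓ ∉ K ∧ K ⊆ E

/-- A CI-structure on `E`: a (symmetric) set of well-formed CI-statements. -/
def IsCIStructOn {α : Type*} [DecidableEq α] (E : Finset α)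
    (G : α → α → Finset α → Prop) : Prop :=
  (∀ i j K, G i j K → wfCI E i j K) ∧ (∀ i j K, G i j K → G j i K)

/-- The axiom (MCI): `(ij|K) ∉ G` implies `(iℓ|jKL) ∈ G`. -/
def MCIax {α : Type*} [DecidableEq α] (E : Finset α)
    (G : α → α → Finset α → Prop) : Prop :=
  ∀ i j ℓ K L, wf3 E i j ℓ K →
    L ⊆ E \ (insert i (insert j (insert ℓ K))) →
    ¬ G i j K → G i ℓ (insert j (K ∪ L))

/-- The semigraphoid axiom (SG): `(ij|K) ∈ G` and `(iℓ|jK) ∈ G` imply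
`(iℓ|K) ∈ G` and `(ij|ℓK) ∈ G`. -/
def SGax {α : Type*} [DecidableEq α] (E : Finset α)
    (G : α → α → Finset α → Prop) : Prop :=
  ∀ i j ℓ K, wf3 E i j ℓ K →
    G i j K → G i ℓ (insert j K) → G i ℓ K ∧ G i j (insert ℓ K)

/-- The recursion for the rank function of the matroid of a CI-structure:
`r(∅) = 0`, `r` of singletons is `1`, and
`r(ijK) = r(iK) + r(jK) - r(K)` if `(ij|K) ∈ G`, one less otherwise
(written additively to avoid truncated subtraction). -/
def RecSat {α : Type*} [DecidableEq α] (E : Finset α)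
    (G : α → α → Finset α → Prop) (r : Finset α → ℕ) : Prop :=
  r ∅ = 0 ∧ (∀ i ∈ E, r {i} = 1) ∧
    ∀ i j K, wfCI E i j K →
      (G i j K →
        r (insert i (insert j K)) + r K = r (insert i K) + r (insert j K)) ∧
      (¬ G i j K →
        r (insert i (insert j K)) + r K + 1 = r (insert i K) + r (insert j K))

/-!
Record the nullity `|S| - r(S)` along an ordering of `S`: adding `i` to a set built as
`K₀ ⊂ K₁ ⊂ ⋯ ⊂ K`, one element `a` at a time, costs one unit for every step with
`(ia|Kₜ) ∉ G`. The exchange identity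
`[(ix|K) ∉ G] + [(iy|xK) ∉ G] = [(iy|K) ∉ G] + [(ix|yK) ∉ G]`, a case check using (MCI) and
(SG), makes this cost, and hence the nullity, independent of the ordering, and the recursion
holds by construction. By (MCI), after the first failure every later statement `(ia|M)` lies
in `G`, so the cost of adding `i` is at most one and grows with `K`: `r` is monotone and
submodular.
-/

namespace Finset

variable {α : Type*} [DecidableEq α] {E : Finset α}

lemma le_of_subset_of_le_insert {β : Type*} [Preorder β] {f : Finset α → β}
    (hf : ∀ a T, a ∉ T → insert a T ⊆ E → f T ≤ f (insert a T))
    {A B : Finset α} (hAB : A ⊆ B) (hBE : B ⊆ E) : f A ≤ f B := by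
  suffices ∀ D : Finset α, A ∪ D ⊆ E → f A ≤ f (A ∪ D) by
    simpa [union_sdiff_of_subset hAB] using this (B \ A) (by rwa [union_sdiff_of_subset hAB])
  intro D
  induction D using Finset.induction_on with
  | empty => simp
  | @insert d D _ ih =>
    rw [union_insert]
    intro hE
    by_cases hd : d ∈ A ∪ D
    · rw [insert_eq_of_mem hd] at hE ⊢
      exact ih hE
    · exact (ih ((subset_insert _ _).trans hE)).trans (hf d _ hd hE)

lemma union_add_inter_le_of_insert {f : Finset α → ℕ}
    (hf : ∀ a X Y, X ⊆ Y → a ∉ Y → insert a Y ⊆ E →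
      f (insert a Y) + f X ≤ f (insert a X) + f Y)
    {A B : Finset α} (hAE : A ⊆ E) (hBE : B ⊆ E) : f (A ∪ B) + f (A ∩ B) ≤ f A + f B := by
  suffices ∀ D ⊆ A \ B, f (B ∪ D) + f (A ∩ B) ≤ f (A ∩ B ∪ D) + f B by
    have h := this (A \ B) Subset.rfl
    rwa [union_sdiff_self_eq_union, union_comm B A,
      show A ∩ B ∪ A \ B = A from sup_inf_sdiff A B] at h
  intro D
  induction D using Finset.induction_on with
  | empty => simp [add_comm]
  | @insert d D hdD ih =>
    intro hD
    obtain ⟨hd, hD⟩ := insert_subset_iff.mp hD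
    obtain ⟨hdA, hdB⟩ := mem_sdiff.mp hd
    have hstep := hf d (A ∩ B ∪ D) (B ∪ D) (union_subset_union inter_subset_right Subset.rfl)
      (by simp [hdB, hdD])
      (insert_subset (hAE hdA) (union_subset hBE (hD.trans (sdiff_subset.trans hAE))))
    rw [union_insert, union_insert]
    have := ih hD
    omega

end Finset

section
variable {α : Type*} {G : α → α → Finset α → Prop}

open scoped Classical in
variable (G) in
noncomputable def ciDefect (i j : α) (K : Finset α) : ℕ :=
  if G i j K then 0 else 1

lemma ciDefect_le_one (i j : α) (K : Finset α) : ciDefect G i j K ≤ 1 := by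
  unfold ciDefect; split_ifs <;> omega

lemma ciDefect_eq_zero {i j : α} {K : Finset α} : ciDefect G i j K = 0 ↔ G i j K := by
  unfold ciDefect; split_ifs <;> simp_all

lemma ciDefect_comm (hsymm : ∀ i j K, G i j K → G j i K) (i j : α) (K : Finset α) :
    ciDefect G i j K = ciDefect G j i K := by
  unfold ciDefect
  split_ifs <;> first | rfl | exact absurd (hsymm _ _ _ ‹_›) ‹_›

variable [DecidableEq α] {E : Finset α}

lemma ciDefect_exchange (hMCI : MCIax E G) (hSG : SGax E G) {i x y : α} {K : Finset α}
    (h : wf3 E i x y K) :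
    ciDefect G i x K + ciDefect G i y (insert x K) =
      ciDefect G i y K + ciDefect G i x (insert y K) := by
  have h' : wf3 E i y x K := by
    obtain ⟨hi, hx, hy, hix, hiy, hxy, hiK, hxK, hyK, hKE⟩ := h
    exact ⟨hi, hy, hx, hiy, hix, hxy.symm, hiK, hyK, hxK, hKE⟩
  have mci_xy : ¬ G i x K → G i y (insert x K) := by
    simpa using hMCI i x y K ∅ h (empty_subset _)
  have mci_yx : ¬ G i y K → G i x (insert y K) := by
    simpa using hMCI i y x K ∅ h' (empty_subset _)
  have sg_xy := hSG i x y K h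
  have sg_yx := hSG i y x K h'
  unfold ciDefect
  split_ifs <;> simp_all

-- `a :: l` adds `a` to `l.toFinset`: lists are built up from their tail.
variable (G) in
noncomputable def listNullityGain (i : α) : List α → ℕ
  | [] => 0
  | a :: l => listNullityGain i l + ciDefect G i a l.toFinset

variable (G) in
noncomputable def listNullity : List α → ℕ
  | [] => 0
  | a :: l => listNullity l + listNullityGain G a l

lemma listNullityGain_perm (hMCI : MCIax E G) (hSG : SGax E G) {i : α} (hi : i ∈ E)
    {l l' : List α} (hp : l.Perm l') (hnd : l.Nodup) (hlE : ∀ x ∈ l, x ∈ E) (hil : i ∉ l) :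
    listNullityGain G i l = listNullityGain G i l' := by
  induction hp with
  | nil => rfl
  | @cons a l l' hp ih =>
    simp only [List.nodup_cons, List.mem_cons, not_or, forall_eq_or_imp] at hnd hlE hil
    simp only [listNullityGain, ih hnd.2 hlE.2 hil.2, List.toFinset_eq_of_perm _ _ hp]
  | swap x y l =>
    simp only [List.nodup_cons, List.mem_cons, not_or, forall_eq_or_imp] at hnd hlE hil
    have hw : wf3 E i x y l.toFinset :=
      ⟨hi, hlE.2.1, hlE.1, hil.2.1, hil.1, fun h => hnd.1.1 h.symm, by simpa using hil.2.2,
        by simpa using hnd.2.1, by simpa using hnd.1.2, fun z hz => hlE.2.2 z (by simpa using hz)⟩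
    have := ciDefect_exchange hMCI hSG hw
    simp only [listNullityGain, List.toFinset_cons]
    omega
  | trans hp₁₂ _ ih₁₂ ih₂₃ =>
    rw [ih₁₂ hnd hlE hil, ih₂₃ (hp₁₂.nodup_iff.mp hnd) (fun x hx => hlE x (hp₁₂.mem_iff.mpr hx))
      (fun h => hil (hp₁₂.mem_iff.mpr h))]

lemma listNullity_perm (hsymm : ∀ i j K, G i j K → G j i K) (hMCI : MCIax E G) (hSG : SGax E G)
    {l l' : List α} (hp : l.Perm l') (hnd : l.Nodup) (hlE : ∀ x ∈ l, x ∈ E) :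
    listNullity G l = listNullity G l' := by
  induction hp with
  | nil => rfl
  | @cons a l l' hp ih =>
    simp only [List.nodup_cons, List.mem_cons, forall_eq_or_imp] at hnd hlE
    simp only [listNullity, ih hnd.2 hlE.2,
      listNullityGain_perm hMCI hSG hlE.1 hp hnd.2 hlE.2 hnd.1]
  | swap x y l =>
    simp only [listNullity, listNullityGain, ciDefect_comm hsymm x y]
    omega
  | trans hp₁₂ _ ih₁₂ ih₂₃ =>
    rw [ih₁₂ hnd hlE, ih₂₃ (hp₁₂.nodup_iff.mp hnd) (fun x hx => hlE x (hp₁₂.mem_iff.mpr hx))]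

-- In the matroid, `nullityGain G i K = r K + 1 - r (insert i K)`: it is `1` iff `i ∈ cl K`.
variable (G) in
noncomputable def nullityGain (i : α) (K : Finset α) : ℕ := listNullityGain G i K.toList

variable (G) in
noncomputable def nullity (S : Finset α) : ℕ := listNullity G S.toList

@[simp]
lemma nullityGain_empty (i : α) : nullityGain G i ∅ = 0 := by
  simp [nullityGain, listNullityGain]

@[simp]
lemma nullity_empty : nullity G (∅ : Finset α) = 0 := by
  simp [nullity, listNullity]

lemma nullityGain_insert (hMCI : MCIax E G) (hSG : SGax E G) {i j : α} {K : Finset α}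
    (h : wfCI E i j K) :
    nullityGain G i (insert j K) = nullityGain G i K + ciDefect G i j K := by
  obtain ⟨hi, hj, hij, hiK, hjK, hKE⟩ := h
  have hmem : ∀ x ∈ (insert j K).toList, x ∈ E := by
    simpa using ⟨hj, hKE⟩
  rw [nullityGain, listNullityGain_perm hMCI hSG hi (toList_insert hjK) (nodup_toList _) hmem
    (by simp [hij, hiK])]
  simp [listNullityGain, nullityGain]

lemma nullity_insert (hsymm : ∀ i j K, G i j K → G j i K) (hMCI : MCIax E G) (hSG : SGax E G)
    {a : α} {T : Finset α} (ha : a ∈ E) (haT : a ∉ T) (hT : T ⊆ E) :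
    nullity G (insert a T) = nullity G T + nullityGain G a T := by
  have hmem : ∀ x ∈ (insert a T).toList, x ∈ E := by
    simpa using ⟨ha, hT⟩
  rw [nullity, listNullity_perm hsymm hMCI hSG (toList_insert haT) (nodup_toList _) hmem]
  rfl

lemma MCIax.of_insert_subset (hMCI : MCIax E G) {i a b : α} {J M : Finset α}
    (hi : i ∈ E) (ha : a ∈ E) (hia : i ≠ a) (hME : M ⊆ E) (hiM : i ∉ M) (haM : a ∉ M)
    (hbJ : b ∉ J) (hbJM : insert b J ⊆ M) (hib : ¬ G i b J) : G i a M := by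
  obtain ⟨hbM, hJM⟩ := insert_subset_iff.mp hbJM
  have hw : wf3 E i b a J := ⟨hi, hME hbM, ha, ne_of_mem_of_not_mem hbM hiM |>.symm, hia,
    ne_of_mem_of_not_mem hbM haM, fun h => hiM (hJM h), hbJ, fun h => haM (hJM h),
    hJM.trans hME⟩
  have hL : M \ insert b J ⊆ E \ insert i (insert b (insert a J)) := by
    intro x hx
    simp only [mem_sdiff, mem_insert, not_or] at hx ⊢
    exact ⟨hME hx.1, fun h => hiM (h ▸ hx.1), hx.2.1, fun h => haM (h ▸ hx.1), hx.2.2⟩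
  have := hMCI i b a J (M \ insert b J) hw hL hib
  rwa [← insert_union, union_sdiff_of_subset hbJM] at this

lemma exists_not_of_nullityGain_pos (hMCI : MCIax E G) (hSG : SGax E G) {i : α} (hi : i ∈ E)
    {K : Finset α} (hKE : K ⊆ E) (hiK : i ∉ K) (hpos : 0 < nullityGain G i K) :
    ∃ b J, b ∉ J ∧ insert b J ⊆ K ∧ ¬ G i b J := by
  induction K using Finset.induction_on with
  | empty => simp at hpos
  | @insert j K hjK ih =>
    obtain ⟨hjE, hKE⟩ := insert_subset_iff.mp hKE
    obtain ⟨hij, hiK⟩ : i ≠ j ∧ i ∉ K := by simpa using hiK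
    rw [nullityGain_insert hMCI hSG ⟨hi, hjE, hij, hiK, hjK, hKE⟩] at hpos
    by_cases hj : G i j K
    · obtain ⟨b, J, hbJ, hbJK, hib⟩ := ih hKE hiK (by simpa [ciDefect_eq_zero.mpr hj] using hpos)
      exact ⟨b, J, hbJ, hbJK.trans (subset_insert j K), hib⟩
    · exact ⟨j, K, hjK, Subset.rfl, hj⟩

lemma nullityGain_le_one (hMCI : MCIax E G) (hSG : SGax E G) {i : α} (hi : i ∈ E)
    {K : Finset α} (hKE : K ⊆ E) (hiK : i ∉ K) : nullityGain G i K ≤ 1 := by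
  induction K using Finset.induction_on with
  | empty => simp
  | @insert j K hjK ih =>
    obtain ⟨hjE, hKE⟩ := insert_subset_iff.mp hKE
    obtain ⟨hij, hiK⟩ : i ≠ j ∧ i ∉ K := by simpa using hiK
    rw [nullityGain_insert hMCI hSG ⟨hi, hjE, hij, hiK, hjK, hKE⟩]
    rcases Nat.eq_zero_or_pos (nullityGain G i K) with h0 | hpos
    · simpa [h0] using ciDefect_le_one i j K
    · obtain ⟨b, J, hbJ, hbJK, hib⟩ := exists_not_of_nullityGain_pos hMCI hSG hi hKE hiK hpos
      have hj : G i j K := hMCI.of_insert_subset hi hjE hij hKE hiK hjK hbJ hbJK hib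
      simpa [ciDefect_eq_zero.mpr hj] using ih hKE hiK

lemma nullityGain_mono (hMCI : MCIax E G) (hSG : SGax E G) {i : α} (hi : i ∈ E)
    {X Y : Finset α} (hXY : X ⊆ Y) (hYE : Y ⊆ E) (hiY : i ∉ Y) :
    nullityGain G i X ≤ nullityGain G i Y := by
  refine le_of_subset_of_le_insert (E := E.erase i) (fun a T haT hT => ?_) hXY
    (subset_erase.mpr ⟨hYE, hiY⟩)
  obtain ⟨haTE, hiaT⟩ := subset_erase.mp hT
  obtain ⟨haE, hTE⟩ := insert_subset_iff.mp haTE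
  obtain ⟨hia, hiT⟩ : i ≠ a ∧ i ∉ T := by simpa using hiaT
  rw [nullityGain_insert hMCI hSG ⟨hi, haE, hia, hiT, haT, hTE⟩]
  exact Nat.le_add_right _ _

lemma nullity_le_card (hsymm : ∀ i j K, G i j K → G j i K) (hMCI : MCIax E G) (hSG : SGax E G)
    {S : Finset α} (hSE : S ⊆ E) : nullity G S ≤ S.card := by
  induction S using Finset.induction_on with
  | empty => simp
  | @insert a T haT ih =>
    obtain ⟨haE, hTE⟩ := insert_subset_iff.mp hSE
    rw [nullity_insert hsymm hMCI hSG haE haT hTE, card_insert_of_notMem haT]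
    have := nullityGain_le_one hMCI hSG haE hTE haT
    have := ih hTE
    omega

variable (G) in
noncomputable def ciRank (S : Finset α) : ℕ := S.card - nullity G S

lemma ciRank_insert (hsymm : ∀ i j K, G i j K → G j i K) (hMCI : MCIax E G) (hSG : SGax E G)
    {a : α} {T : Finset α} (ha : a ∈ E) (haT : a ∉ T) (hT : T ⊆ E) :
    ciRank G (insert a T) + nullityGain G a T = ciRank G T + 1 := by
  have := nullity_le_card hsymm hMCI hSG hT
  have := nullityGain_le_one hMCI hSG ha hT haT
  simp only [ciRank, nullity_insert hsymm hMCI hSG ha haT hT, card_insert_of_notMem haT]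
  omega

lemma ciRank_singleton (hsymm : ∀ i j K, G i j K → G j i K) (hMCI : MCIax E G) (hSG : SGax E G)
    {a : α} (ha : a ∈ E) : ciRank G {a} = 1 := by
  simpa [ciRank] using ciRank_insert hsymm hMCI hSG ha (notMem_empty a) (empty_subset E)

lemma ciRank_insert_insert (hsymm : ∀ i j K, G i j K → G j i K) (hMCI : MCIax E G)
    (hSG : SGax E G) {i j : α} {K : Finset α} (h : wfCI E i j K) :
    ciRank G (insert i (insert j K)) + ciRank G K + ciDefect G i j K =
      ciRank G (insert i K) + ciRank G (insert j K) := by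
  obtain ⟨hi, hj, hij, hiK, hjK, hKE⟩ := h
  have hjK' := ciRank_insert hsymm hMCI hSG hj hjK hKE
  have hiK' := ciRank_insert hsymm hMCI hSG hi hiK hKE
  have hijK := ciRank_insert hsymm hMCI hSG hi (by simp [hij, hiK]) (insert_subset hj hKE)
  rw [nullityGain_insert hMCI hSG ⟨hi, hj, hij, hiK, hjK, hKE⟩] at hijK
  omega

variable (E) in
noncomputable def ciMatroid (hsymm : ∀ i j K, G i j K → G j i K) (hMCI : MCIax E G)
    (hSG : SGax E G) : FinMatroid α where
  E := E
  r := ciRank G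
  r_empty := by simp [ciRank]
  r_le_card _ _ := Nat.sub_le _ _
  r_mono _ _ hAB hBE := le_of_subset_of_le_insert (fun a T haT hT => by
    obtain ⟨haE, hTE⟩ := insert_subset_iff.mp hT
    have := ciRank_insert hsymm hMCI hSG haE haT hTE
    have := nullityGain_le_one hMCI hSG haE hTE haT
    omega) hAB hBE
  r_submod _ _ := union_add_inter_le_of_insert fun a X Y hXY haY hY => by
    obtain ⟨haE, hYE⟩ := insert_subset_iff.mp hY
    have := ciRank_insert hsymm hMCI hSG haE haY hYE
    have := ciRank_insert hsymm hMCI hSG haE (fun h => haY (hXY h)) (hXY.trans hYE)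
    have := nullityGain_mono hMCI hSG haE hXY hYE haY
    omega

lemma recSat_iff {r : Finset α → ℕ} :
    RecSat E G r ↔ r ∅ = 0 ∧ (∀ i ∈ E, r {i} = 1) ∧ ∀ i j K, wfCI E i j K →
      r (insert i (insert j K)) + r K + ciDefect G i j K = r (insert i K) + r (insert j K) := by
  refine and_congr_right' (and_congr_right' (forall₄_congr fun i j K _ => ?_))
  unfold ciDefect
  split_ifs with h <;> simp [h]

lemma RecSat.eqOn {r₁ r₂ : Finset α → ℕ} (h₁ : RecSat E G r₁) (h₂ : RecSat E G r₂)
    {S : Finset α} (hSE : S ⊆ E) : r₁ S = r₂ S := by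
  rw [recSat_iff] at h₁ h₂
  suffices ∀ K ⊆ E, r₁ K = r₂ K ∧ ∀ i ∈ E, i ∉ K → r₁ (insert i K) = r₂ (insert i K) from
    (this S hSE).1
  intro K hKE
  induction K using Finset.induction_on with
  | empty => simp +contextual [h₁.1, h₂.1, h₁.2.1, h₂.2.1]
  | @insert j K hjK ih =>
    obtain ⟨hjE, hKE⟩ := insert_subset_iff.mp hKE
    obtain ⟨hK, hiK⟩ := ih hKE
    refine ⟨hiK j hjE hjK, fun i hi hijK => ?_⟩
    obtain ⟨hij, hiK'⟩ : i ≠ j ∧ i ∉ K := by simpa using hijK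
    have e₁ := h₁.2.2 i j K ⟨hi, hjE, hij, hiK', hjK, hKE⟩
    have e₂ := h₂.2.2 i j K ⟨hi, hjE, hij, hiK', hjK, hKE⟩
    have := hiK i hi hiK'
    have := hiK j hjE hjK
    omega

end

/-- for a CI-structure satisfying (MCI) and (SG), the recursion
defines a unique function on subsets of `E`, which is the rank function of
a loopless matroid on `E`. -/
theorem rank_recursion_wellDefined {α : Type*} [DecidableEq α] (E : Finset α)
    (G : α → α → Finset α → Prop) (hG : IsCIStructOn E G)
    (hMCI : MCIax E G) (hSG : SGax E G) :
    (∃ M : FinMatroid α, M.E = E ∧ M.Loopless ∧ RecSat E G M.r) ∧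
      (∀ r₁ r₂ : Finset α → ℕ, RecSat E G r₁ → RecSat E G r₂ →
        ∀ S ⊆ E, r₁ S = r₂ S) := by
  have hsingleton : ∀ i ∈ E, ciRank G {i} = 1 := fun _ hi => ciRank_singleton hG.2 hMCI hSG hi
  refine ⟨⟨ciMatroid E hG.2 hMCI hSG, rfl, hsingleton, ?_⟩,
    fun _ _ h₁ h₂ _ hS => h₁.eqOn h₂ hS⟩
  exact recSat_iff.mpr ⟨by simp [ciMatroid, ciRank], hsingleton,
    fun _ _ _ h => ciRank_insert_insert hG.2 hMCI hSG h⟩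
end

section
/- A CI-structure G ⊆ A_E is equal to [[M]] for some loopless matroid M on E if and only if G satisfies (MCI): (ij|K) ∉ G implies (iℓ|jKL) ∈ G, and (SG): (ij|K) ∈ G and (iℓ|jK) ∈ G imply (iℓ|K) ∈ G and (ij|ℓK) ∈ G. Moreover, distinct loopless matroids on E give distinct CI-structures, so the correspondence is a bijection. -/
open Finset

set_option linter.unusedSectionVars false

section Construction
variable {α : Type*} [DecidableEq α] (E : Finset α) (G : α → α → Finset α → Prop)

/-- `i` is in the "closure" of `S` (for `i ∈ E \ S`, `S ⊆ E`). -/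
def cpred (i : α) (S : Finset α) : Prop := ∃ j ∈ S, ∃ K ⊆ S.erase j, ¬ G i j K

open Classical in
noncomputable def sfun (i : α) (S : Finset α) : ℕ := if cpred G i S then 0 else 1

variable {E G}

lemma cpred_mono {i : α} {S T : Finset α} (hST : S ⊆ T) (h : cpred G i S) :
    cpred G i T := by
  obtain ⟨j, hj, K, hK, hG⟩ := h
  exact ⟨j, hST hj, K, hK.trans (Finset.erase_subset_erase _ hST), hG⟩

lemma sfun_le_one (i : α) (S : Finset α) : sfun G i S ≤ 1 := by
  unfold sfun; split <;> omega

lemma sfun_anti {i : α} {S T : Finset α} (hST : S ⊆ T) : sfun G i T ≤ sfun G i S := by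
  unfold sfun
  by_cases h : cpred G i S
  · simp [h, cpred_mono hST h]
  · split <;> omega

variable (hG : IsCIStructOn E G) (hM : MCIax E G) (hS : SGax E G)
include hG hM

/-- (b): a dependence statement makes `i` free over `K`. -/
lemma not_cpred_of_notG {i j : α} {K : Finset α} (hwf : wfCI E i j K)
    (h : ¬ G i j K) : ¬ cpred G i K := by
  obtain ⟨hiE, hjE, hij, hiK, hjK, hKE⟩ := hwf
  rintro ⟨k, hkK, K', hK', hnG⟩
  have hkE : k ∈ E := hKE hkK
  have hik : i ≠ k := fun h => hiK (h ▸ hkK)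
  have hkj : k ≠ j := fun h => hjK (h ▸ hkK)
  have hK'K : K' ⊆ K := hK'.trans (Finset.erase_subset _ _)
  have hkK' : k ∉ K' := fun h => (Finset.notMem_erase k K) (hK' h)
  have hwf3 : wf3 E i k j K' :=
    ⟨hiE, hkE, hjE, hik, hij, hkj, fun h => hiK (hK'K h), hkK',
      fun h => hjK (hK'K h), hK'K.trans hKE⟩
  have hL : K \ insert k K' ⊆ E \ insert i (insert k (insert j K')) := by
    intro x hx
    simp only [Finset.mem_sdiff, Finset.mem_insert] at hx ⊢
    obtain ⟨hxK, hx2⟩ := hx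
    refine ⟨hKE hxK, ?_⟩
    push_neg at hx2 ⊢
    exact ⟨fun h => hiK (h ▸ hxK), hx2.1, fun h => hjK (h ▸ hxK), hx2.2⟩
  have := hM i k j K' (K \ insert k K') hwf3 hL hnG
  have heq : insert k (K' ∪ (K \ insert k K')) = K := by
    ext x
    simp only [Finset.mem_insert, Finset.mem_union, Finset.mem_sdiff]
    constructor
    · rintro (rfl | hx | ⟨hx, _⟩)
      · exact hkK
      · exact hK'K hx
      · exact hx
    · intro hx
      by_cases hxk : x = k
      · exact Or.inl hxk
      · by_cases hxK' : x ∈ K'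
        · exact Or.inr (Or.inl hxK')
        · refine Or.inr (Or.inr ⟨hx, ?_⟩)
          simp [hxk, hxK']
  rw [heq] at this
  exact h this

include hS

/-- The growth lemma: a dependence below `K` either certifies `cpred G i K`
or propagates to `K` itself. -/
lemma grow {i j : α} (hiE : i ∈ E) (hjE : j ∈ E) (hij : i ≠ j)
    {K : Finset α} (hKE : K ⊆ E) (hiK : i ∉ K) (hjK : j ∉ K) :
    ∀ n (K' : Finset α), K' ⊆ K → (K \ K').card ≤ n → ¬ G i j K' →
      cpred G i K ∨ ¬ G i j K := by
  intro n
  induction n with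
  | zero =>
    intro K' hsub hcard hnG
    have : K \ K' = ∅ := Finset.card_eq_zero.mp (Nat.le_zero.mp hcard)
    have : K' = K := Finset.Subset.antisymm hsub (fun x hx => by
      by_contra hxK'
      have : x ∈ K \ K' := Finset.mem_sdiff.mpr ⟨hx, hxK'⟩
      simp [‹K \ K' = ∅›] at this)
    exact Or.inr (this ▸ hnG)
  | succ n ih =>
    intro K' hsub hcard hnG
    by_cases hKK' : K' = K
    · exact Or.inr (hKK' ▸ hnG)
    · have hne : (K \ K').Nonempty := by
        rw [Finset.sdiff_nonempty]
        intro h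
        exact hKK' (Finset.Subset.antisymm hsub h)
      obtain ⟨m, hm⟩ := hne
      rw [Finset.mem_sdiff] at hm
      obtain ⟨hmK, hmK'⟩ := hm
      by_cases h1 : G i m K'
      · by_cases h2 : G i j (insert m K')
        · -- SG gives G i j K', contradiction
          have hwf3 : wf3 E i m j K' :=
            ⟨hiE, hKE hmK, hjE, fun h => hiK (h ▸ hmK), hij,
              fun h => hjK (h ▸ hmK), fun h => hiK (hsub h), hmK',
              fun h => hjK (hsub h), hsub.trans hKE⟩
          exact absurd (hS i m j K' hwf3 h1 h2).1 hnG
        · -- recurse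
          refine ih (insert m K') (Finset.insert_subset hmK hsub) ?_ h2
          have : K \ insert m K' = (K \ K').erase m := by
            ext x; simp only [Finset.mem_sdiff, Finset.mem_erase, Finset.mem_insert]
            tauto
          rw [this, Finset.card_erase_of_mem (Finset.mem_sdiff.mpr ⟨hmK, hmK'⟩)]
          omega
      · exact Or.inl ⟨m, hmK, K', Finset.subset_erase.mpr ⟨hsub, hmK'⟩, h1⟩

/-- (c): if `(ij|K) ∈ G` and `i` is in the closure of `jK`, it is in the
closure of `K`. -/
lemma cl_absorb_G {i j : α} {K : Finset α} (hwf : wfCI E i j K)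
    (hGij : G i j K) (h : cpred G i (insert j K)) : cpred G i K := by
  obtain ⟨hiE, hjE, hij, hiK, hjK, hKE⟩ := hwf
  obtain ⟨k, hk, K', hK', hnG⟩ := h
  rw [Finset.mem_insert] at hk
  rcases hk with rfl | hkK
  · -- k = j, K' ⊆ K
    have hK'K : K' ⊆ K := by
      rwa [Finset.erase_insert hjK] at hK'
    rcases grow hG hM hS hiE hjE hij hKE hiK hjK (K \ K').card K' hK'K le_rfl hnG with
      h | h
    · exact h
    · exact absurd hGij h
  · -- k ∈ K
    have hkE : k ∈ E := hKE hkK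
    have hik : i ≠ k := fun h => hiK (h ▸ hkK)
    have hjk : j ≠ k := fun h => hjK (h ▸ hkK)
    have hkK' : k ∉ K' := fun h => (Finset.notMem_erase k _) (hK' h)
    by_cases hjK' : j ∈ K'
    · -- j ∈ K'
      set K'' := K'.erase j with hK''def
      have hjK'' : j ∉ K'' := Finset.notMem_erase _ _
      have hkK'' : k ∉ K'' := fun h => hkK' (Finset.erase_subset _ _ h)
      have hK''K : K'' ⊆ K := by
        intro x hx
        have hx' : x ∈ K' := Finset.erase_subset _ _ hx
        have := hK' hx'
        rw [Finset.mem_erase, Finset.mem_insert] at this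
        rcases this.2 with rfl | h
        · exact absurd hx (by simp [hK''def])
        · exact h
      have hiK'' : i ∉ K'' := fun h => hiK (hK''K h)
      have hK'eq : K' = insert j K'' := by
        rw [hK''def, Finset.insert_erase hjK']
      have hnG' : ¬ G i k (insert j K'') := hK'eq ▸ hnG
      -- first: G i j K'' must hold
      have hGijK'' : G i j K'' := by
        by_contra hc
        have hwf3 : wf3 E i j k K'' :=
          ⟨hiE, hjE, hkE, hij, hik, hjk, hiK'', hjK'', hkK'', hK''K.trans hKE⟩
        have hL : (∅ : Finset α) ⊆ E \ insert i (insert j (insert k K'')) := by simp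
        have := hM i j k K'' ∅ hwf3 hL hc
        rw [Finset.union_empty] at this
        -- this : G i k (insert j K'')
        exact hnG' this
      by_cases h1 : G i k K''
      · by_cases h2 : G i j (insert k K'')
        · -- SG(i,k,j,K'') : contradiction with hnG'
          have hwf3 : wf3 E i k j K'' :=
            ⟨hiE, hkE, hjE, hik, hij, hjk.symm, hiK'', hkK'', hjK'', hK''K.trans hKE⟩
          exact absurd (hS i k j K'' hwf3 h1 h2).2 hnG'
        · -- grow with K' := insert k K''
          have hsub : insert k K'' ⊆ K := Finset.insert_subset hkK hK''K
          rcases grow hG hM hS hiE hjE hij hKE hiK hjK _ _ hsub le_rfl h2 with h | h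
          · exact h
          · exact absurd hGij h
      · exact ⟨k, hkK, K'', Finset.subset_erase.mpr ⟨hK''K, hkK''⟩, h1⟩
    · -- direct witness
      have hK'K : K' ⊆ K.erase k := by
        intro x hx
        have := hK' hx
        rw [Finset.mem_erase, Finset.mem_insert] at this
        rcases this.2 with rfl | h
        · exact absurd hx hjK'
        · exact Finset.mem_erase.mpr ⟨this.1, h⟩
      exact ⟨k, hkK, K', hK'K, hnG⟩

/-- (e): closure absorption. -/
lemma cl_absorb {i j : α} {K : Finset α} (hiE : i ∈ E) (hjE : j ∈ E)
    (hij : i ≠ j) (hKE : K ⊆ E) (hiK : i ∉ K) (hjK : j ∉ K)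
    (hci : cpred G i K) (h : cpred G j (insert i K)) : cpred G j K := by
  obtain ⟨k, hk, K', hK', hnG⟩ := h
  rw [Finset.mem_insert] at hk
  have contra_of_nGjiK : ¬ G j i K → False := by
    intro h
    have hnGij : ¬ G i j K := fun hc => h (hG.2 _ _ _ hc)
    exact (not_cpred_of_notG hG hM ⟨hiE, hjE, hij, hiK, hjK, hKE⟩ hnGij) hci
  rcases hk with rfl | hkK
  · -- k = i, K' ⊆ K
    have hK'K : K' ⊆ K := by rwa [Finset.erase_insert hiK] at hK'
    rcases grow hG hM hS hjE hiE hij.symm hKE hjK hiK (K \ K').card K' hK'K le_rfl hnG with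
      h | h
    · exact h
    · exact absurd (contra_of_nGjiK h) id
  · have hkE : k ∈ E := hKE hkK
    have hik : i ≠ k := fun h => hiK (h ▸ hkK)
    have hjk : j ≠ k := fun h => hjK (h ▸ hkK)
    have hkK' : k ∉ K' := fun h => (Finset.notMem_erase k _) (hK' h)
    by_cases hiK' : i ∈ K'
    · set K'' := K'.erase i with hK''def
      have hiK'' : i ∉ K'' := Finset.notMem_erase _ _
      have hkK'' : k ∉ K'' := fun h => hkK' (Finset.erase_subset _ _ h)
      have hK''K : K'' ⊆ K := by
        intro x hx
        have hx' : x ∈ K' := Finset.erase_subset _ _ hx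
        have := hK' hx'
        rw [Finset.mem_erase, Finset.mem_insert] at this
        rcases this.2 with rfl | h
        · exact absurd hx (by simp [hK''def])
        · exact h
      have hjK'' : j ∉ K'' := fun h => hjK (hK''K h)
      have hK'eq : K' = insert i K'' := by rw [hK''def, Finset.insert_erase hiK']
      have hnG' : ¬ G j k (insert i K'') := hK'eq ▸ hnG
      by_cases h1 : G j k K''
      · by_cases h2 : G j i (insert k K'')
        · have hwf3 : wf3 E j k i K'' :=
            ⟨hjE, hkE, hiE, hjk, hij.symm, hik.symm, hjK'', hkK'', hiK'', hK''K.trans hKE⟩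
          exact absurd (hS j k i K'' hwf3 h1 h2).2 hnG'
        · have hsub : insert k K'' ⊆ K := Finset.insert_subset hkK hK''K
          rcases grow hG hM hS hjE hiE hij.symm hKE hjK hiK _ _ hsub le_rfl h2 with h | h
          · exact h
          · exact absurd (contra_of_nGjiK h) id
      · exact ⟨k, hkK, K'', Finset.subset_erase.mpr ⟨hK''K, hkK''⟩, h1⟩
    · have hK'K : K' ⊆ K.erase k := by
        intro x hx
        have := hK' hx
        rw [Finset.mem_erase, Finset.mem_insert] at this
        rcases this.2 with rfl | h
        · exact absurd hx hiK'
        · exact Finset.mem_erase.mpr ⟨this.1, h⟩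
      exact ⟨k, hkK, K', hK'K, hnG⟩

/-- (d): the exchange identity for `sfun`. -/
lemma sfun_exchange {i j : α} {K : Finset α} (hiE : i ∈ E) (hjE : j ∈ E)
    (hij : i ≠ j) (hKE : K ⊆ E) (hiK : i ∉ K) (hjK : j ∉ K) :
    sfun G i (insert j K) + sfun G j K = sfun G j (insert i K) + sfun G i K := by
  have hwfij : wfCI E i j K := ⟨hiE, hjE, hij, hiK, hjK, hKE⟩
  have hwfji : wfCI E j i K := ⟨hjE, hiE, hij.symm, hjK, hiK, hKE⟩
  unfold sfun
  by_cases hi : cpred G i K <;> by_cases hj : cpred G j K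
  · simp [hi, hj, cpred_mono (Finset.subset_insert j K) hi,
      cpred_mono (Finset.subset_insert i K) hj]
  · -- c i K, ¬ c j K : need ¬ cpred G j (insert i K)
    have h1 : ¬ cpred G j (insert i K) := fun h => hj (cl_absorb hG hM hS hiE hjE hij hKE hiK hjK hi h)
    simp [hi, hj, h1, cpred_mono (Finset.subset_insert j K) hi]
  · have h1 : ¬ cpred G i (insert j K) := fun h => hi (cl_absorb hG hM hS hjE hiE hij.symm hKE hjK hiK hj h)
    simp [hi, hj, h1, cpred_mono (Finset.subset_insert i K) hj]
  · -- neither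
    have key : cpred G i (insert j K) ↔ cpred G j (insert i K) := by
      constructor
      · intro h
        have hnG : ¬ G i j K := fun hc => hi (cl_absorb_G hG hM hS hwfij hc h)
        have hnG' : ¬ G j i K := fun hc => hnG (hG.2 _ _ _ hc)
        exact ⟨i, Finset.mem_insert_self i K, K, by rw [Finset.erase_insert hiK], hnG'⟩
      · intro h
        have hnG : ¬ G j i K := fun hc => hj (cl_absorb_G hG hM hS hwfji hc h)
        have hnG' : ¬ G i j K := fun hc => hnG (hG.2 _ _ _ hc)
        exact ⟨j, Finset.mem_insert_self j K, K, by rw [Finset.erase_insert hjK], hnG'⟩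
    by_cases h2 : cpred G i (insert j K)
    · simp [hi, hj, h2, key.mp h2]
    · have h3 : ¬ cpred G j (insert i K) := fun h => h2 (key.mpr h)
      simp [hi, hj, h2, h3]

end Construction

section Rank
variable {α : Type*} [DecidableEq α] [LinearOrder α] (G : α → α → Finset α → Prop)

noncomputable def rk0 (S : Finset α) : ℕ :=
  if h : S.Nonempty then
    rk0 (S.erase (S.min' h)) + sfun G (S.min' h) (S.erase (S.min' h))
  else 0
termination_by S.card
decreasing_by exact Finset.card_erase_lt_of_mem (S.min'_mem h)

lemma rk0_empty : rk0 G (∅ : Finset α) = 0 := by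
  rw [rk0]; simp

variable {E : Finset α} {G}
variable (hG : IsCIStructOn E G) (hM : MCIax E G) (hS : SGax E G)
include hG hM hS

lemma rk0_step : ∀ n (S : Finset α), S.card ≤ n → S ⊆ E → ∀ i ∈ E, i ∉ S →
    rk0 G (insert i S) = rk0 G S + sfun G i S := by
  intro n
  induction n with
  | zero =>
    intro S hcard _ i _ hiS
    have : S = ∅ := Finset.card_eq_zero.mp (Nat.le_zero.mp hcard)
    subst this
    rw [rk0]
    have hne : ({i} : Finset α).Nonempty := Finset.singleton_nonempty i
    simp [rk0_empty]
  | succ n ih =>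
    intro S hcard hSE i hiE hiS
    have hne : (insert i S).Nonempty := Finset.insert_nonempty i S
    set m := (insert i S).min' hne with hmdef
    have hm : m ∈ insert i S := (insert i S).min'_mem hne
    rw [rk0]
    simp only [dif_pos hne]
    by_cases hmi : m = i
    · rw [← hmdef, hmi, Finset.erase_insert hiS]
    · have hmS : m ∈ S := by
        rcases Finset.mem_insert.mp hm with h | h
        · exact absurd h hmi
        · exact h
      have hSne : S.Nonempty := ⟨m, hmS⟩
      have hmin : m = S.min' hSne := by
        apply le_antisymm
        · rw [hmdef]
          exact Finset.min'_le _ _ (Finset.mem_insert_of_mem (S.min'_mem hSne))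
        · exact Finset.min'_le S m hmS
      set S' := S.erase m with hS'def
      have hS'E : S' ⊆ E := (Finset.erase_subset _ _).trans hSE
      have hiS' : i ∉ S' := fun h => hiS (Finset.erase_subset _ _ h)
      have hmS' : m ∉ S' := Finset.notMem_erase _ _
      have hmE : m ∈ E := hSE hmS
      have hcard' : S'.card ≤ n := by
        rw [hS'def, Finset.card_erase_of_mem hmS]; omega
      have herase : (insert i S).erase m = insert i S' := by
        rw [hS'def, Finset.erase_insert_of_ne (fun h => hmi h.symm)]
      rw [← hmdef, herase]
      have hih : rk0 G (insert i S') = rk0 G S' + sfun G i S' :=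
        ih S' hcard' hS'E i hiE hiS'
      have hex : sfun G i (insert m S') + sfun G m S' =
          sfun G m (insert i S') + sfun G i S' :=
        sfun_exchange hG hM hS hiE hmE (fun h => hiS (h ▸ hmS)) hS'E hiS' hmS'
      have hinsm : insert m S' = S := by rw [hS'def, Finset.insert_erase hmS]
      have hrkS : rk0 G S = rk0 G S' + sfun G m S' := by
        conv_lhs => rw [rk0]
        simp only [dif_pos hSne]
        rw [← hmin]
      rw [hih, hrkS, ← hinsm]
      omega

lemma rk0_insert {S : Finset α} (hSE : S ⊆ E) {i : α} (hiE : i ∈ E) (hiS : i ∉ S) :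
    rk0 G (insert i S) = rk0 G S + sfun G i S :=
  rk0_step hG hM hS S.card S le_rfl hSE i hiE hiS

lemma rk0_le_card : ∀ n (S : Finset α), S.card ≤ n → S ⊆ E → rk0 G S ≤ S.card := by
  intro n
  induction n with
  | zero =>
    intro S hcard _
    have : S = ∅ := Finset.card_eq_zero.mp (Nat.le_zero.mp hcard)
    subst this; simp [rk0_empty]
  | succ n ih =>
    intro S hcard hSE
    rcases S.eq_empty_or_nonempty with rfl | hne
    · simp [rk0_empty]
    · obtain ⟨m, hm⟩ := hne
      have h1 : rk0 G S = rk0 G (S.erase m) + sfun G m (S.erase m) := by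
        conv_lhs => rw [← Finset.insert_erase hm]
        exact rk0_insert hG hM hS ((Finset.erase_subset _ _).trans hSE) (hSE hm)
          (Finset.notMem_erase _ _)
      have h2 := ih (S.erase m) (by rw [Finset.card_erase_of_mem hm]; omega)
        ((Finset.erase_subset _ _).trans hSE)
      have h3 := sfun_le_one (G := G) m (S.erase m)
      rw [Finset.card_erase_of_mem hm] at h2
      have : 1 ≤ S.card := Finset.card_pos.mpr ⟨m, hm⟩
      omega

lemma rk0_mono : ∀ n (A B : Finset α), (B \ A).card ≤ n → A ⊆ B → B ⊆ E →
    rk0 G A ≤ rk0 G B := by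
  intro n
  induction n with
  | zero =>
    intro A B hcard hAB _
    have : B \ A = ∅ := Finset.card_eq_zero.mp (Nat.le_zero.mp hcard)
    have : B = A := Finset.Subset.antisymm (fun x hx => by
      by_contra hxA
      have : x ∈ B \ A := Finset.mem_sdiff.mpr ⟨hx, hxA⟩
      simp [‹B \ A = ∅›] at this) hAB
    rw [this]
  | succ n ih =>
    intro A B hcard hAB hBE
    by_cases hBA : B ⊆ A
    · rw [Finset.Subset.antisymm hAB hBA]
    · have hne : (B \ A).Nonempty := by
        rw [Finset.sdiff_nonempty]; exact hBA
      obtain ⟨m, hm⟩ := hne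
      rw [Finset.mem_sdiff] at hm
      have hstep : rk0 G (insert m A) = rk0 G A + sfun G m A :=
        rk0_insert hG hM hS (hAB.trans hBE) (hBE hm.1) hm.2
      have h2 : rk0 G (insert m A) ≤ rk0 G B := by
        refine ih (insert m A) B ?_ (Finset.insert_subset hm.1 hAB) hBE
        have : B \ insert m A = (B \ A).erase m := by
          ext x; simp only [Finset.mem_sdiff, Finset.mem_erase, Finset.mem_insert]; tauto
        rw [this, Finset.card_erase_of_mem (Finset.mem_sdiff.mpr hm)]
        omega
      omega

lemma rk0_submod : ∀ n (A B : Finset α), (A \ B).card ≤ n → A ⊆ E → B ⊆ E →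
    rk0 G (A ∪ B) + rk0 G (A ∩ B) ≤ rk0 G A + rk0 G B := by
  intro n
  induction n with
  | zero =>
    intro A B hcard hAE hBE
    have : A \ B = ∅ := Finset.card_eq_zero.mp (Nat.le_zero.mp hcard)
    have hAB : A ⊆ B := by
      intro x hx
      by_contra hxB
      have : x ∈ A \ B := Finset.mem_sdiff.mpr ⟨hx, hxB⟩
      simp [‹A \ B = ∅›] at this
    rw [Finset.union_eq_right.mpr hAB, Finset.inter_eq_left.mpr hAB]
    omega
  | succ n ih =>
    intro A B hcard hAE hBE
    by_cases hAB : A ⊆ B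
    · rw [Finset.union_eq_right.mpr hAB, Finset.inter_eq_left.mpr hAB]; omega
    · have hne : (A \ B).Nonempty := by rw [Finset.sdiff_nonempty]; exact hAB
      obtain ⟨m, hm⟩ := hne
      rw [Finset.mem_sdiff] at hm
      set A' := A.erase m with hA'def
      have hA'E : A' ⊆ E := (Finset.erase_subset _ _).trans hAE
      have hmA' : m ∉ A' := Finset.notMem_erase _ _
      have hinsA : insert m A' = A := Finset.insert_erase hm.1
      have hmE : m ∈ E := hAE hm.1
      have hmA'B : m ∉ A' ∪ B := by
        rw [Finset.mem_union]; rintro (h | h); exacts [hmA' h, hm.2 h]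
      have hU : A ∪ B = insert m (A' ∪ B) := by
        rw [← hinsA, Finset.insert_union]
      have hI : A ∩ B = A' ∩ B := by
        ext x
        simp only [Finset.mem_inter, hA'def, Finset.mem_erase]
        constructor
        · rintro ⟨h1, h2⟩; exact ⟨⟨fun h => hm.2 (h ▸ h2), h1⟩, h2⟩
        · rintro ⟨⟨_, h1⟩, h2⟩; exact ⟨h1, h2⟩
      have hstep1 : rk0 G (A ∪ B) = rk0 G (A' ∪ B) + sfun G m (A' ∪ B) := by
        rw [hU]; exact rk0_insert hG hM hS (Finset.union_subset hA'E hBE) hmE hmA'B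
      have hstep2 : rk0 G A = rk0 G A' + sfun G m A' := by
        rw [← hinsA]; exact rk0_insert hG hM hS hA'E hmE hmA'
      have hanti : sfun G m (A' ∪ B) ≤ sfun G m A' :=
        sfun_anti Finset.subset_union_left
      have hih : rk0 G (A' ∪ B) + rk0 G (A' ∩ B) ≤ rk0 G A' + rk0 G B := by
        refine ih A' B ?_ hA'E hBE
        have : A' \ B = (A \ B).erase m := by
          ext x; simp only [Finset.mem_sdiff, Finset.mem_erase, hA'def]; tauto
        rw [this, Finset.card_erase_of_mem (Finset.mem_sdiff.mpr hm)]
        omega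
      rw [hI]
      omega

lemma rk0_singleton {i : α} (hiE : i ∈ E) : rk0 G ({i} : Finset α) = 1 := by
  have h : ({i} : Finset α) = insert i ∅ := rfl
  rw [h, rk0_insert hG hM hS (Finset.empty_subset E) hiE (Finset.notMem_empty i),
    rk0_empty]
  have : ¬ cpred G i (∅ : Finset α) := by
    rintro ⟨j, hj, _⟩
    exact Finset.notMem_empty j hj
  simp [sfun, this]

/-- The key equivalence: the recursion matches `G`. -/
lemma rk0_ci {i j : α} {K : Finset α} (hwf : wfCI E i j K) :
    (rk0 G (insert i K) + rk0 G (insert j K) =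
      rk0 G (insert i (insert j K)) + rk0 G K) ↔ G i j K := by
  obtain ⟨hiE, hjE, hij, hiK, hjK, hKE⟩ := hwf
  have hijK : i ∉ insert j K := by
    rw [Finset.mem_insert]; rintro (h | h); exacts [hij h, hiK h]
  have h1 : rk0 G (insert i K) = rk0 G K + sfun G i K := rk0_insert hG hM hS hKE hiE hiK
  have h2 : rk0 G (insert j K) = rk0 G K + sfun G j K := rk0_insert hG hM hS hKE hjE hjK
  have h3 : rk0 G (insert i (insert j K)) = rk0 G (insert j K) + sfun G i (insert j K) :=
    rk0_insert hG hM hS (Finset.insert_subset hjE hKE) hiE hijK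
  rw [h3, h1, h2]
  have heq : (rk0 G K + sfun G i K + (rk0 G K + sfun G j K) =
      rk0 G K + sfun G j K + sfun G i (insert j K) + rk0 G K) ↔
      sfun G i K = sfun G i (insert j K) := by omega
  rw [heq]
  constructor
  · intro h
    by_contra hnG
    have hb1 : ¬ cpred G i K := not_cpred_of_notG hG hM ⟨hiE, hjE, hij, hiK, hjK, hKE⟩ hnG
    have hb2 : cpred G i (insert j K) := by
      have hnG' : ¬ G i j K := hnG
      exact ⟨j, Finset.mem_insert_self j K, K, by rw [Finset.erase_insert hjK], hnG'⟩
    simp [sfun, hb1, hb2] at h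
  · intro hGij
    by_cases hc : cpred G i K
    · have : cpred G i (insert j K) := cpred_mono (Finset.subset_insert j K) hc
      simp [sfun, hc, this]
    · have : ¬ cpred G i (insert j K) := fun h =>
        hc (cl_absorb_G hG hM hS ⟨hiE, hjE, hij, hiK, hjK, hKE⟩ hGij h)
      simp [sfun, hc, this]

end Rank

section MatroidFacts
variable {α : Type*} [DecidableEq α] (M : FinMatroid α)

/-- Unit increase. -/
lemma r_insert_le {i : α} {K : Finset α} (hiE : i ∈ M.E) (hKE : K ⊆ M.E) :
    M.r (insert i K) ≤ M.r K + 1 := by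
  have h := M.r_submod (Finset.singleton_subset_iff.mpr hiE) hKE
  have h1 : ({i} : Finset α) ∪ K = insert i K := by
    ext x; simp
  have h2 : M.r ({i} : Finset α) ≤ 1 := by
    have := M.r_le_card (Finset.singleton_subset_iff.mpr hiE)
    simpa using this
  rw [h1] at h
  omega

lemma r_le_insert {i : α} {K : Finset α} (hiE : i ∈ M.E) (hKE : K ⊆ M.E) :
    M.r K ≤ M.r (insert i K) :=
  M.r_mono (Finset.subset_insert i K) (Finset.insert_subset hiE hKE)

/-- Local submodularity. -/
lemma r_local_submod {i j : α} {K : Finset α} (hiE : i ∈ M.E) (hjE : j ∈ M.E)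
    (hij : i ≠ j) (hiK : i ∉ K) (hjK : j ∉ K) (hKE : K ⊆ M.E) :
    M.r (insert i (insert j K)) + M.r K ≤ M.r (insert i K) + M.r (insert j K) := by
  have h := M.r_submod (Finset.insert_subset hiE hKE) (Finset.insert_subset hjE hKE)
  have hU : insert i K ∪ insert j K = insert i (insert j K) := by
    ext x; simp only [Finset.mem_union, Finset.mem_insert]; tauto
  have hI : insert i K ∩ insert j K = K := by
    ext x
    simp only [Finset.mem_inter, Finset.mem_insert]
    constructor
    · rintro ⟨h1 | h1, h2 | h2⟩
      · exact absurd (h1.symm.trans h2) hij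
      · exact absurd (h1 ▸ h2) hiK
      · exact absurd (h2 ▸ h1) hjK
      · exact h1
    · intro hx; exact ⟨Or.inr hx, Or.inr hx⟩
  rw [hU, hI] at h
  omega

/-- Closure monotonicity. -/
lemma r_cl_mono {a : α} {A B : Finset α} (haE : a ∈ M.E) (hAB : A ⊆ B)
    (hBE : B ⊆ M.E) (h : M.r (insert a A) = M.r A) :
    M.r (insert a B) = M.r B := by
  by_cases haB : a ∈ B
  · rw [Finset.insert_eq_self.mpr haB]
  · have hsub := M.r_submod (Finset.insert_subset haE (hAB.trans hBE)) hBE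
    have hU : insert a A ∪ B = insert a B := by
      ext x; simp only [Finset.mem_union, Finset.mem_insert]
      constructor
      · rintro (⟨rfl | h1⟩ | h1)
        exacts [Or.inl rfl, Or.inr (hAB h1), Or.inr h1]
      · rintro (rfl | h1); exacts [Or.inl (Or.inl rfl), Or.inr h1]
    have hI : insert a A ∩ B = A := by
      ext x; simp only [Finset.mem_inter, Finset.mem_insert]
      constructor
      · rintro ⟨rfl | h1, h2⟩
        · exact absurd h2 haB
        · exact h1
      · intro hx; exact ⟨Or.inr hx, hAB hx⟩
    rw [hU, hI, h] at hsub
    have := r_le_insert M haE hBE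
    omega

/-- Consequences of a failed CI statement. -/
lemma r_of_not_ci {i j : α} {K : Finset α} (hiE : i ∈ M.E) (hjE : j ∈ M.E)
    (hij : i ≠ j) (hiK : i ∉ K) (hjK : j ∉ K) (hKE : K ⊆ M.E)
    (h : ¬ (M.r (insert i K) + M.r (insert j K) =
      M.r (insert i (insert j K)) + M.r K)) :
    M.r (insert i (insert j K)) = M.r (insert j K) ∧
      M.r (insert i K) = M.r K + 1 := by
  have h1 := r_local_submod M hiE hjE hij hiK hjK hKE
  have h2 := r_insert_le M hiE hKE
  have h3 : M.r (insert j K) ≤ M.r (insert i (insert j K)) :=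
    M.r_mono (Finset.subset_insert _ _)
      (Finset.insert_subset hiE (Finset.insert_subset hjE hKE))
  have h4 := r_le_insert M hiE hKE
  omega

end MatroidFacts


namespace FinMatroid
variable {α : Type*} [DecidableEq α] (M : FinMatroid α)

lemma ciOf_symm {i j : α} {K : Finset α} (h : M.ciOf i j K) : M.ciOf j i K := by
  obtain ⟨⟨h1, h2, h3, h4, h5, h6⟩, hci⟩ := h
  refine ⟨⟨h2, h1, h3.symm, h5, h4, h6⟩, ?_⟩
  unfold CI at hci ⊢
  rw [Finset.insert_comm]
  omega

lemma mci_of_matroid {i j ℓ : α} {K L : Finset α}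
    (hiE : i ∈ M.E) (hjE : j ∈ M.E) (hlE : ℓ ∈ M.E)
    (hij : i ≠ j) (hil : i ≠ ℓ) (hjl : j ≠ ℓ)
    (hiK : i ∉ K) (hjK : j ∉ K) (hlK : ℓ ∉ K) (hKE : K ⊆ M.E)
    (hL : L ⊆ M.E \ (insert i (insert j (insert ℓ K))))
    (h : ¬ M.ciOf i j K) : M.ciOf i ℓ (insert j (K ∪ L)) := by
  have hLE : L ⊆ M.E := fun x hx => (Finset.mem_sdiff.mp (hL hx)).1
  have hLn : ∀ x ∈ L, x ≠ i ∧ x ≠ j ∧ x ≠ ℓ ∧ x ∉ K := by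
    intro x hx
    have := (Finset.mem_sdiff.mp (hL hx)).2
    simp only [Finset.mem_insert, not_or] at this
    exact ⟨this.1, this.2.1, this.2.2.1, this.2.2.2⟩
  have hnci : ¬ M.CI i j K := fun hc => h ⟨⟨hiE, hjE, hij, hiK, hjK, hKE⟩, hc⟩
  have hkey := r_of_not_ci M hiE hjE hij hiK hjK hKE hnci
  set B := insert j (K ∪ L) with hBdef
  have hBE : B ⊆ M.E := Finset.insert_subset hjE (Finset.union_subset hKE hLE)
  have hiB : i ∉ B := by
    simp only [hBdef, Finset.mem_insert, Finset.mem_union, not_or]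
    exact ⟨hij, hiK, fun hx => (hLn i hx).1 rfl⟩
  have hlB : ℓ ∉ B := by
    simp only [hBdef, Finset.mem_insert, Finset.mem_union, not_or]
    exact ⟨hjl.symm, hlK, fun hx => (hLn ℓ hx).2.2.1 rfl⟩
  have hjKB : insert j K ⊆ B := by
    simp only [hBdef]
    exact Finset.insert_subset_insert _ Finset.subset_union_left
  have h1 : M.r (insert i B) = M.r B :=
    r_cl_mono M hiE hjKB hBE hkey.1
  have h2 : M.r (insert i (insert ℓ B)) = M.r (insert ℓ B) :=
    r_cl_mono M hiE (hjKB.trans (Finset.subset_insert ℓ B))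
      (Finset.insert_subset hlE hBE) hkey.1
  refine ⟨⟨hiE, hlE, hil, hiB, hlB, hBE⟩, ?_⟩
  unfold CI
  rw [h1, h2]
  omega

lemma sg_of_matroid {i j ℓ : α} {K : Finset α}
    (hiE : i ∈ M.E) (hjE : j ∈ M.E) (hlE : ℓ ∈ M.E)
    (hij : i ≠ j) (hil : i ≠ ℓ) (hjl : j ≠ ℓ)
    (hiK : i ∉ K) (hjK : j ∉ K) (hlK : ℓ ∉ K) (hKE : K ⊆ M.E)
    (h1 : M.ciOf i j K) (h2 : M.ciOf i ℓ (insert j K)) :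
    M.ciOf i ℓ K ∧ M.ciOf i j (insert ℓ K) := by
  have hci1 : M.CI i j K := h1.2
  have hci2 : M.CI i ℓ (insert j K) := h2.2
  unfold CI at hci1 hci2
  have hcomm1 : insert ℓ (insert j K) = insert j (insert ℓ K) := Finset.insert_comm _ _ _
  rw [hcomm1] at hci2
  have hilK : i ∉ insert ℓ K := by
    simp only [Finset.mem_insert, not_or]; exact ⟨hil, hiK⟩
  have hjlK : j ∉ insert ℓ K := by
    simp only [Finset.mem_insert, not_or]; exact ⟨hjl, hjK⟩
  have hlKE : insert ℓ K ⊆ M.E := Finset.insert_subset hlE hKE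
  have hs3 := r_local_submod M hiE hlE hil hiK hlK hKE
  have hs4 := r_local_submod M hiE hjE hij hilK hjlK hlKE
  constructor
  · refine ⟨⟨hiE, hlE, hil, hiK, hlK, hKE⟩, ?_⟩
    unfold CI
    omega
  · refine ⟨⟨hiE, hjE, hij, hilK, hjlK, hlKE⟩, ?_⟩
    unfold CI
    omega

end FinMatroid

/-- a CI-structure equals `[[M]]` for a loopless matroid `M` on
`E` iff it satisfies (MCI) and (SG); moreover distinct loopless matroids give
distinct CI-structures, so the correspondence is one-to-one. -/
theorem matroid_ci_characterization {α : Type*} [DecidableEq α] (E : Finset α)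
    (G : α → α → Finset α → Prop) :
    ((∃ M : FinMatroid α, M.E = E ∧ M.Loopless ∧
        ∀ i j K, G i j K ↔ M.ciOf i j K) ↔
      (IsCIStructOn E G ∧ MCIax E G ∧ SGax E G)) ∧
    (∀ M₁ M₂ : FinMatroid α, M₁.E = E → M₂.E = E →
      M₁.Loopless → M₂.Loopless →
      (∀ i j K, M₁.ciOf i j K ↔ M₂.ciOf i j K) →
      ∀ S ⊆ E, M₁.r S = M₂.r S) := by
  constructor
  · constructor
    · rintro ⟨M, hME, hloop, hiff⟩
      subst hME
      refine ⟨⟨fun i j K h => ((hiff i j K).mp h).1,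
        fun i j K h => (hiff j i K).mpr (M.ciOf_symm ((hiff i j K).mp h))⟩, ?_, ?_⟩
      · intro i j ℓ K L hwf3 hL hnG
        obtain ⟨hiE, hjE, hlE, hij, hil, hjl, hiK, hjK, hlK, hKE⟩ := hwf3
        exact (hiff _ _ _).mpr (M.mci_of_matroid hiE hjE hlE hij hil hjl hiK hjK hlK hKE hL
          (fun hc => hnG ((hiff _ _ _).mpr hc)))
      · intro i j ℓ K hwf3 h1 h2
        obtain ⟨hiE, hjE, hlE, hij, hil, hjl, hiK, hjK, hlK, hKE⟩ := hwf3
        obtain ⟨c1, c2⟩ := M.sg_of_matroid hiE hjE hlE hij hil hjl hiK hjK hlK hKE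
          ((hiff _ _ _).mp h1) ((hiff _ _ _).mp h2)
        exact ⟨(hiff _ _ _).mpr c1, (hiff _ _ _).mpr c2⟩
    · rintro ⟨hG, hM, hS⟩
      letI : LinearOrder α := by classical exact linearOrderOfSTO WellOrderingRel
      refine ⟨⟨E, fun S => rk0 G (S ∩ E), ?_, ?_, ?_, ?_⟩, rfl, ?_, ?_⟩
      · simp [rk0_empty]
      · intro A hA
        rw [Finset.inter_eq_left.mpr hA]
        exact rk0_le_card hG hM hS A.card A le_rfl hA
      · intro A B hAB hBE
        rw [Finset.inter_eq_left.mpr (hAB.trans hBE), Finset.inter_eq_left.mpr hBE]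
        exact rk0_mono hG hM hS (B \ A).card A B le_rfl hAB hBE
      · intro A B hAE hBE
        rw [Finset.inter_eq_left.mpr (Finset.union_subset hAE hBE),
          Finset.inter_eq_left.mpr (Finset.inter_subset_left.trans hAE),
          Finset.inter_eq_left.mpr hAE, Finset.inter_eq_left.mpr hBE]
        exact rk0_submod hG hM hS (A \ B).card A B le_rfl hAE hBE
      · intro e he
        show rk0 G ({e} ∩ E) = 1
        rw [Finset.inter_eq_left.mpr (Finset.singleton_subset_iff.mpr he)]
        exact rk0_singleton hG hM hS he
      · intro i j K
        have key : ∀ hwf : wfCI E i j K,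
            (rk0 G (insert i K ∩ E) + rk0 G (insert j K ∩ E) =
              rk0 G (insert i (insert j K) ∩ E) + rk0 G (K ∩ E)) ↔ G i j K := by
          intro hwf
          obtain ⟨hiE, hjE, hij, hiK, hjK, hKE⟩ := hwf
          rw [Finset.inter_eq_left.mpr (Finset.insert_subset hiE hKE),
            Finset.inter_eq_left.mpr (Finset.insert_subset hjE hKE),
            Finset.inter_eq_left.mpr
              (Finset.insert_subset hiE (Finset.insert_subset hjE hKE)),
            Finset.inter_eq_left.mpr hKE]
          exact rk0_ci hG hM hS ⟨hiE, hjE, hij, hiK, hjK, hKE⟩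
        constructor
        · intro h
          have hwf := hG.1 i j K h
          exact ⟨hwf, (key hwf).mpr h⟩
        · rintro ⟨hwf, hci⟩
          exact (key hwf).mp hci
  · intro M₁ M₂ h1E h2E hl1 hl2 hiff S hSE
    subst h1E
    suffices h : ∀ n (S : Finset α), S.card ≤ n → S ⊆ M₁.E → M₁.r S = M₂.r S from
      h S.card S le_rfl hSE
    intro n
    induction n with
    | zero =>
      intro S hc _
      have : S = ∅ := Finset.card_eq_zero.mp (Nat.le_zero.mp hc)
      subst this
      rw [M₁.r_empty, M₂.r_empty]
    | succ n ih =>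
      intro S hc hSE
      rcases lt_or_ge S.card 2 with hlt | hge
      · have h01 : S.card = 0 ∨ S.card = 1 := by omega
        rcases h01 with h0 | h1
        · have : S = ∅ := Finset.card_eq_zero.mp h0
          subst this
          rw [M₁.r_empty, M₂.r_empty]
        · obtain ⟨e, rfl⟩ := Finset.card_eq_one.mp h1
          have heE : e ∈ M₁.E := hSE (Finset.mem_singleton_self e)
          rw [hl1 e heE, hl2 e (h2E.symm ▸ heE)]
      · obtain ⟨i, hiS, j, hjS, hij⟩ := Finset.one_lt_card.mp hge
        set K := (S.erase i).erase j with hKdef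
        have hjSi : j ∈ S.erase i := Finset.mem_erase.mpr ⟨fun h => hij h.symm, hjS⟩
        have hseq1 : insert j K = S.erase i := Finset.insert_erase hjSi
        have hSeq : insert i (insert j K) = S := by
          rw [hseq1, Finset.insert_erase hiS]
        have hiK : i ∉ K := fun h =>
          Finset.notMem_erase i S ((Finset.erase_subset _ _) h)
        have hjK : j ∉ K := Finset.notMem_erase _ _
        have hijK : i ∉ insert j K := by rw [hseq1]; exact Finset.notMem_erase _ _
        have hKS : K ⊆ S := ((Finset.erase_subset _ _).trans (Finset.erase_subset _ _))
        have hKE : K ⊆ M₁.E := hKS.trans hSE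
        have hiE : i ∈ M₁.E := hSE hiS
        have hjE : j ∈ M₁.E := hSE hjS
        have hiE2 : i ∈ M₂.E := h2E.symm ▸ hiE
        have hjE2 : j ∈ M₂.E := h2E.symm ▸ hjE
        have hKE2 : K ⊆ M₂.E := h2E.symm ▸ hKE
        have hcardK : K.card = S.card - 2 := by
          rw [hKdef, Finset.card_erase_of_mem hjSi, Finset.card_erase_of_mem hiS]
          omega
        have hcardjK : (insert j K).card = S.card - 1 := by
          rw [Finset.card_insert_of_notMem hjK, hcardK]; omega
        have hcardiK : (insert i K).card = S.card - 1 := by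
          rw [Finset.card_insert_of_notMem hiK, hcardK]; omega
        have ihK : M₁.r K = M₂.r K := ih K (by omega) hKE
        have ihiK : M₁.r (insert i K) = M₂.r (insert i K) :=
          ih _ (by omega) (Finset.insert_subset hiE hKE)
        have ihjK : M₁.r (insert j K) = M₂.r (insert j K) :=
          ih _ (by omega) (Finset.insert_subset hjE hKE)
        have b1 := r_local_submod M₁ hiE hjE hij hiK hjK hKE
        have b2 := r_local_submod M₂ hiE2 hjE2 hij hiK hjK hKE2
        have u1 := r_insert_le M₁ hiE hKE
        have u2 := r_insert_le M₂ hiE2 hKE2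
        have m1 : M₁.r (insert j K) ≤ M₁.r (insert i (insert j K)) :=
          M₁.r_mono (Finset.subset_insert _ _)
            (Finset.insert_subset hiE (Finset.insert_subset hjE hKE))
        have m2 : M₂.r (insert j K) ≤ M₂.r (insert i (insert j K)) :=
          M₂.r_mono (Finset.subset_insert _ _)
            (Finset.insert_subset hiE2 (Finset.insert_subset hjE2 hKE2))
        have hwf1 : wfCI M₁.E i j K := ⟨hiE, hjE, hij, hiK, hjK, hKE⟩
        have hwf2 : wfCI M₂.E i j K := ⟨hiE2, hjE2, hij, hiK, hjK, hKE2⟩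
        have hciff : M₁.CI i j K ↔ M₂.CI i j K := by
          constructor
          · intro c; exact ((hiff i j K).mp ⟨hwf1, c⟩).2
          · intro c; exact ((hiff i j K).mpr ⟨hwf2, c⟩).2
        rw [← hSeq]
        by_cases hc1 : M₁.CI i j K
        · have hc2 := hciff.mp hc1
          unfold FinMatroid.CI at hc1 hc2
          omega
        · have hc2 : ¬ M₂.CI i j K := fun c => hc1 (hciff.mpr c)
          unfold FinMatroid.CI at hc1 hc2
          omega
end

section
/- For a loopless matroid M on E, the independent sets of M are exactly the sets S ⊆ E such that every CI-statement (ij|K) with K ⊆ S and i ≠ j ∈ S \ K lies in [[M]]; that is, S is independent in M iff A_S ⊆ [[M]]. -/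
open Finset

section Aux
variable {α : Type*} [DecidableEq α]

lemma aux_r_insert_le (M : FinMatroid α) {A : Finset α} (hA : A ⊆ M.E) {x : α}
    (hx : x ∈ M.E) : M.r (insert x A) ≤ M.r A + 1 := by
  have h := M.r_submod hA (show ({x} : Finset α) ⊆ M.E by simpa using hx)
  have h1 : M.r {x} ≤ 1 := by
    simpa using M.r_le_card (show ({x} : Finset α) ⊆ M.E by simpa using hx)
  have h2 : M.r (A ∪ {x}) ≤ M.r A + M.r {x} := le_trans (Nat.le_add_right _ _) h
  have he : A ∪ {x} = insert x A := by ext a; simp [or_comm]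
  rw [he] at h2; omega

lemma aux_r_union_le (M : FinMatroid α) {T : Finset α} (hT : T ⊆ M.E) :
    ∀ D : Finset α, D ⊆ M.E → M.r (T ∪ D) ≤ M.r T + D.card := by
  intro D
  induction D using Finset.induction with
  | empty => simp
  | @insert x D hx ih =>
    intro hD
    have hxE : x ∈ M.E := hD (mem_insert_self _ _)
    have hDE : D ⊆ M.E := (subset_insert x D).trans hD
    have he : T ∪ insert x D = insert x (T ∪ D) := union_insert x T D
    have h1 := aux_r_insert_le M (show T ∪ D ⊆ M.E from union_subset hT hDE) hxE
    have h2 := ih hDE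
    rw [he, card_insert_of_notMem hx]
    omega

lemma aux_subset_tight (M : FinMatroid α) {S T : Finset α} (hS : S ⊆ M.E)
    (hr : M.r S = S.card) (hT : T ⊆ S) : M.r T = T.card := by
  have hTE : T ⊆ M.E := hT.trans hS
  have h1 : M.r T ≤ T.card := M.r_le_card hTE
  have he : T ∪ (S \ T) = S := union_sdiff_of_subset hT
  have h2 := aux_r_union_le M hTE (S \ T) ((sdiff_subset).trans hS)
  rw [he, hr] at h2
  have hc : (S \ T).card = S.card - T.card := card_sdiff_of_subset hT
  have hle : T.card ≤ S.card := card_le_card hT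
  omega

lemma aux_back (M : FinMatroid α) (hM : M.Loopless) :
    ∀ S : Finset α, S ⊆ M.E →
      (∀ (i j : α) (K : Finset α), K ⊆ S → i ∈ S → j ∈ S → i ≠ j →
        i ∉ K → j ∉ K → M.CI i j K) → M.r S = S.card := by
  intro S
  induction S using Finset.strongInduction with
  | _ S ih =>
    intro hSE hCI
    rcases S.eq_empty_or_nonempty with rfl | ⟨i, hi⟩
    · simpa using M.r_empty
    rcases (S.erase i).eq_empty_or_nonempty with he | ⟨j, hj⟩
    · have : S = {i} := by
        apply Finset.eq_singleton_iff_unique_mem.mpr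
        exact ⟨hi, fun x hx => by
          by_contra hne
          exact absurd (Finset.mem_erase.mpr ⟨hne, hx⟩) (by simp [he])⟩
      rw [this]
      simpa using hM i (hSE hi)
    have hjS : j ∈ S := mem_of_mem_erase hj
    have hji : j ≠ i := (mem_erase.mp hj).1
    set K := (S.erase i).erase j with hK
    have hKS : K ⊆ S := (erase_subset _ _).trans (erase_subset _ _)
    have hiK : i ∉ K := fun h => (notMem_erase i _) (mem_of_mem_erase h)
    have hjK : j ∉ K := notMem_erase j _
    have hci := hCI i j K hKS hi hjS (Ne.symm hji) hiK hjK
    have e1 : insert j K = S.erase i := insert_erase hj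
    have e2 : insert i (insert j K) = S := by rw [e1, insert_erase hi]
    have e3 : insert i K = S.erase j := by
      rw [hK, erase_right_comm]
      exact insert_erase (mem_erase.mpr ⟨fun h => hji h.symm, hi⟩)
    unfold FinMatroid.CI at hci
    rw [e3, e2, e1] at hci
    -- apply IH
    have h1 : M.r (S.erase i) = (S.erase i).card :=
      ih _ (erase_ssubset hi) ((erase_subset _ _).trans hSE)
        (fun a b L hL ha hb => hCI a b L (hL.trans (erase_subset _ _))
          (mem_of_mem_erase ha) (mem_of_mem_erase hb))
    have h2 : M.r (S.erase j) = (S.erase j).card :=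
      ih _ (erase_ssubset hjS) ((erase_subset _ _).trans hSE)
        (fun a b L hL ha hb => hCI a b L (hL.trans (erase_subset _ _))
          (mem_of_mem_erase ha) (mem_of_mem_erase hb))
    have h3 : M.r K = K.card := by
      refine ih _ ?_ (hKS.trans hSE)
        (fun a b L hL ha hb => hCI a b L (hL.trans hKS) (hKS ha) (hKS hb))
      exact Finset.ssubset_of_subset_of_ssubset ((erase_subset _ _)) (erase_ssubset hi)
    have c1 : (S.erase i).card = S.card - 1 := card_erase_of_mem hi
    have c2 : (S.erase j).card = S.card - 1 := card_erase_of_mem hjS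
    have c3 : K.card = S.card - 2 := by
      rw [hK, card_erase_of_mem hj, card_erase_of_mem hi]; omega
    have hpos : 1 ≤ S.card := card_pos.mpr ⟨i, hi⟩
    have hpos2 : 2 ≤ S.card := by
      have : (S.erase i).card ≥ 1 := card_pos.mpr ⟨j, hj⟩
      omega
    have hle : M.r S ≤ S.card := M.r_le_card hSE
    omega

end Aux

/-- for a loopless matroid `M`, a set `S ⊆ E` is independent
iff every well-formed CI-statement `(ij|K)` with `ijK ⊆ S` lies in `[[M]]`,
i.e. `A_S ⊆ [[M]]`. -/
theorem indep_iff_all_CI {α : Type*} [DecidableEq α] (M : FinMatroid α)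
    (hM : M.Loopless) (S : Finset α) (hS : S ⊆ M.E) :
    M.Indep S ↔
      (∀ (i j : α) (K : Finset α), K ⊆ S → i ∈ S → j ∈ S → i ≠ j →
        i ∉ K → j ∉ K → M.CI i j K) := by
  constructor
  · rintro ⟨-, hr⟩ i j K hKS hiS hjS hij hiK hjK
    have hik : M.r (insert i K) = (insert i K).card :=
      aux_subset_tight M hS hr (insert_subset hiS hKS)
    have hjk : M.r (insert j K) = (insert j K).card :=
      aux_subset_tight M hS hr (insert_subset hjS hKS)
    have hijk : M.r (insert i (insert j K)) = (insert i (insert j K)).card :=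
      aux_subset_tight M hS hr (insert_subset hiS (insert_subset hjS hKS))
    have hk : M.r K = K.card := aux_subset_tight M hS hr hKS
    have ci : (insert i K).card = K.card + 1 := card_insert_of_notMem hiK
    have cj : (insert j K).card = K.card + 1 := card_insert_of_notMem hjK
    have cij : (insert i (insert j K)).card = K.card + 2 := by
      rw [card_insert_of_notMem (by simp [hij, hiK]), cj]
    unfold FinMatroid.CI
    omega
  · intro h
    exact ⟨hS, aux_back M hM S hS h⟩
end

section
/- For any matroid M on ground set E, the CI-structure of the dual matroid satisfies [[M*]] = [[M]]*, where for a CI-structure G on E, G* := {(ij | E \ (ij∪K)) : (ij|K) ∈ G}. -/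
open Finset

/-- The dual matroid, with rank function `r*(S) = |S| + r(E \ S) - r(E)`. -/
def FinMatroid.dual {α : Type*} [DecidableEq α] (M : FinMatroid α) :
    FinMatroid α where
  E := M.E
  r S := S.card + M.r (M.E \ S) - M.r M.E
  r_empty := by simp
  r_le_card := by
    intro S hS
    try dsimp only
    have h1 : M.r (M.E \ S) ≤ M.r M.E := M.r_mono sdiff_subset (Finset.Subset.refl _)
    omega
  r_mono := by
    intro S T hST hT
    try dsimp only
    have hS : S ⊆ M.E := hST.trans hT
    have key : M.E \ S = (M.E \ T) ∪ (T \ S) := by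
      ext x
      simp only [mem_sdiff, mem_union]
      have h1 : x ∈ S → x ∈ T := fun h => hST h
      have h2 : x ∈ T → x ∈ M.E := fun h => hT h
      tauto
    have h3 : M.r (M.E \ S) ≤ M.r (M.E \ T) + (T \ S).card := by
      have hTS : T \ S ⊆ M.E := (sdiff_subset).trans hT
      have hsub := M.r_submod (A := M.E \ T) (B := T \ S) sdiff_subset hTS
      have hcard : M.r (T \ S) ≤ (T \ S).card := M.r_le_card hTS
      rw [key]
      omega
    have h4 : (T \ S).card = T.card - S.card := card_sdiff_of_subset hST
    have h5 : S.card ≤ T.card := card_le_card hST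
    omega
  r_submod := by
    intro S T hS hT
    try dsimp only
    have k1 : (M.E \ S) ∪ (M.E \ T) = M.E \ (S ∩ T) := by
      ext x; simp only [mem_sdiff, mem_union, mem_inter]; tauto
    have k2 : (M.E \ S) ∩ (M.E \ T) = M.E \ (S ∪ T) := by
      ext x; simp only [mem_sdiff, mem_union, mem_inter]; tauto
    have h := M.r_submod (A := M.E \ S) (B := M.E \ T) sdiff_subset sdiff_subset
    rw [k1, k2] at h
    have c := card_union_add_card_inter S T
    have lb : ∀ X : Finset α, X ⊆ M.E → M.r M.E ≤ X.card + M.r (M.E \ X) := by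
      intro X hX
      have e1 : (M.E \ X) ∪ X = M.E := by
        ext x
        simp only [mem_sdiff, mem_union]
        have h1 : x ∈ X → x ∈ M.E := fun h => hX h
        tauto
      have h2 := M.r_submod (A := M.E \ X) (B := X) sdiff_subset hX
      have h3 := M.r_le_card hX
      rw [e1] at h2
      omega
    have l1 := lb S hS
    have l2 := lb T hT
    have l3 := lb (S ∪ T) (union_subset hS hT)
    have l4 := lb (S ∩ T) ((inter_subset_left).trans hS)
    omega

/-! Dualising `(ij|K)` to `(ij | E \ ijK)` turns each of the four rank terms of the CI equation
into a dual rank term of the complementary set, since `r*(X) + r(E) = |X| + r(E \ X)`. The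
cardinalities of the four sets add up to the same total on both sides of the equation, and the
four `r(E \ X)` are exactly the rank terms of the primal equation at the complementary set. -/

theorem Finset.sdiff_eq_insert_sdiff_insert {α : Type*} [DecidableEq α] {E S : Finset α} {x : α}
    (hx : x ∈ E) (hxS : x ∉ S) : E \ S = insert x (E \ insert x S) := by
  rw [sdiff_insert, insert_erase (mem_sdiff.2 ⟨hx, hxS⟩)]

namespace wfCI

variable {α : Type*} [DecidableEq α] {E K : Finset α} {i j : α}

theorem sdiff_insert_insert (h : wfCI E i j K) : wfCI E i j (E \ insert i (insert j K)) := by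
  obtain ⟨hi, hj, hij, -, -, -⟩ := h
  exact ⟨hi, hj, hij, by simp, by simp, sdiff_subset⟩

theorem sdiff_insert_insert_sdiff_insert_insert (h : wfCI E i j K) :
    E \ insert i (insert j (E \ insert i (insert j K))) = K := by
  obtain ⟨-, -, -, hiK, hjK, hKE⟩ := h
  ext x
  grind

end wfCI

namespace FinMatroid

variable {α : Type*} [DecidableEq α] (M : FinMatroid α)

theorem r_le_card_add_r_sdiff {X : Finset α} (hX : X ⊆ M.E) :
    M.r M.E ≤ X.card + M.r (M.E \ X) := by
  have h := M.r_submod (A := M.E \ X) (B := X) sdiff_subset hX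
  rw [sdiff_union_of_subset hX] at h
  have := M.r_le_card hX
  omega

theorem dual_r_add_r {X : Finset α} (hX : X ⊆ M.E) :
    M.dual.r X + M.r M.E = X.card + M.r (M.E \ X) := by
  have := M.r_le_card_add_r_sdiff hX
  simp only [dual]
  omega

theorem dual_CI_iff {i j : α} {K : Finset α} (h : wfCI M.E i j K) :
    M.dual.CI i j K ↔ M.CI i j (M.E \ insert i (insert j K)) := by
  obtain ⟨hi, hj, hij, hiK, hjK, hKE⟩ := h
  have hjiK : j ∉ insert i K := by simp [hij.symm, hjK]
  have hijK : i ∉ insert j K := by simp [hij, hiK]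
  have compl_iK : M.E \ insert i K = insert j (M.E \ insert i (insert j K)) := by
    rw [sdiff_eq_insert_sdiff_insert hj hjiK, insert_comm j i]
  have compl_jK : M.E \ insert j K = insert i (M.E \ insert i (insert j K)) :=
    sdiff_eq_insert_sdiff_insert hi hijK
  have compl_K : M.E \ K = insert i (insert j (M.E \ insert i (insert j K))) := by
    rw [sdiff_eq_insert_sdiff_insert hi hiK, compl_iK]
  have dual_iK := M.dual_r_add_r (insert_subset hi hKE)
  have dual_jK := M.dual_r_add_r (insert_subset hj hKE)
  have dual_ijK := M.dual_r_add_r (insert_subset hi (insert_subset hj hKE))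
  have dual_K := M.dual_r_add_r hKE
  rw [compl_iK, card_insert_of_notMem hiK] at dual_iK
  rw [compl_jK, card_insert_of_notMem hjK] at dual_jK
  rw [card_insert_of_notMem hijK, card_insert_of_notMem hjK] at dual_ijK
  rw [compl_K] at dual_K
  unfold CI
  omega

end FinMatroid

/-- `[[M*]] = [[M]]*`: a CI-statement `(ij|K)` belongs to the
CI-structure of the dual matroid iff it is of the form `(ij | E \ ijK')` for
some `(ij|K')` in `[[M]]`. -/
theorem ci_dual {α : Type*} [DecidableEq α] (M : FinMatroid α) :
    ∀ (i j : α) (K : Finset α),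
      M.dual.ciOf i j K ↔
        (∃ K' : Finset α, M.ciOf i j K' ∧
          K = M.E \ (insert i (insert j K'))) := by
  intro i j K
  constructor
  · rintro ⟨hwf, hci⟩
    exact ⟨_, ⟨hwf.sdiff_insert_insert, (M.dual_CI_iff hwf).1 hci⟩,
      hwf.sdiff_insert_insert_sdiff_insert_insert.symm⟩
  · rintro ⟨K', ⟨hwf, hci⟩, rfl⟩
    refine ⟨hwf.sdiff_insert_insert, (M.dual_CI_iff hwf.sdiff_insert_insert).2 ?_⟩
    rwa [hwf.sdiff_insert_insert_sdiff_insert_insert]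
end

section
/- Let C be the set of signed circuits of an oriented matroid M on [n], let K ⊆ [n] and i ≠ j ∈ [n] \ K with (ij|K) a conditional dependence statement of the underlying matroid (i.e. r(iK)+r(jK) ≠ r(ijK)+r(K)). Then for any two signed circuits X, Y ∈ C with {i,j} ⊆ supp(X) ⊆ {i,j}∪K and {i,j} ⊆ supp(Y) ⊆ {i,j}∪K, we have X(i)X(j) = Y(i)Y(j). -/
open Finset

/-- The support of a signed subset of `Fin n`. -/
def sgnSupp {n : ℕ} (X : Fin n → ℤ) : Finset (Fin n) :=
  Finset.univ.filter (fun e => X e ≠ 0)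

lemma supp_neg {n : ℕ} (X : Fin n → ℤ) : sgnSupp (-X) = sgnSupp X := by
  ext g; simp [sgnSupp]

lemma lemA {α : Type*} [DecidableEq α] [Fintype α] (M : FinMatroid α)
    (hME : M.E = Finset.univ) (i j : α) (K : Finset α) (hij : i ≠ j) (hiK : i ∉ K) (hjK : j ∉ K)
    (D : Finset α) (hD : M.Circuit D) (hjD : j ∈ D) (hDK : D ⊆ insert j K) :
    M.CI i j K := by
  have hsubE : ∀ S : Finset α, S ⊆ M.E := by intro S; rw [hME]; exact subset_univ S
  have hDe : D.erase j ⊂ D := erase_ssubset hjD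
  have h1 : M.r (D.erase j) = (D.erase j).card := hD.2.2 _ hDe
  have hcard : (D.erase j).card = D.card - 1 := card_erase_of_mem hjD
  have hrD : M.r D = D.card - 1 := by
    have h2 := hD.2.1
    have h3 : M.r (D.erase j) ≤ M.r D := M.r_mono (erase_subset _ _) (hsubE D)
    omega
  have hKDi : K ∩ D = D.erase j := by
    ext x
    simp only [mem_inter, mem_erase]
    constructor
    · rintro ⟨hK, hD⟩; exact ⟨fun h => hjK (h ▸ hK), hD⟩
    · rintro ⟨hne, hD'⟩
      rcases mem_insert.1 (hDK hD') with h | h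
      · exact absurd h hne
      · exact ⟨h, hD'⟩
  have hKDu : K ∪ D = insert j K := by
    apply Subset.antisymm
    · intro x hx
      rcases mem_union.1 hx with h | h
      · exact mem_insert.2 (Or.inr h)
      · exact hDK h
    · intro x hx
      rcases mem_insert.1 hx with h | h
      · exact mem_union_right _ (h ▸ hjD)
      · exact mem_union_left _ h
  have hsub := M.r_submod (hsubE K) (hsubE D)
  rw [hKDu, hKDi, h1, hcard, hrD] at hsub
  have hcard1 : 1 ≤ D.card := card_pos.2 ⟨j, hjD⟩
  have hmono : M.r K ≤ M.r (insert j K) := M.r_mono (subset_insert _ _) (hsubE _)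
  have hjKK : M.r (insert j K) = M.r K := by omega
  have hui : (insert i K) ∪ (insert j K) = insert i (insert j K) := by
    ext x; simp only [mem_union, mem_insert]; tauto
  have hii : (insert i K) ∩ (insert j K) = K := by
    ext x
    simp only [mem_inter, mem_insert]
    constructor
    · rintro ⟨hi | hi, hj | hj⟩
      · exact absurd (hi.symm.trans hj) hij
      · exact absurd (hi ▸ hj) hiK
      · exact absurd (hj ▸ hi) hjK
      · exact hi
    · intro h; exact ⟨Or.inr h, Or.inr h⟩
  have hsub2 := M.r_submod (hsubE (insert i K)) (hsubE (insert j K))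
  rw [hui, hii] at hsub2
  have hmono2 : M.r (insert i K) ≤ M.r (insert i (insert j K)) := by
    apply M.r_mono _ (hsubE _)
    intro x hx
    rcases mem_insert.1 hx with h | h
    · exact h ▸ mem_insert_self _ _
    · exact mem_insert.2 (Or.inr (mem_insert.2 (Or.inr h)))
  unfold FinMatroid.CI
  omega

/-- if `(ij|K)` is a conditional dependence statement of the
underlying matroid of an oriented matroid with signed circuits `C`, then any
two signed circuits `X, Y` with `{i,j} ⊆ supp ⊆ {i,j} ∪ K` satisfy
`X(i)X(j) = Y(i)Y(j)`. -/
theorem signed_circuit_sign_welldefined (n : ℕ) (C : Set (Fin n → ℤ))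
    -- signed subsets take values in {-1, 0, 1}
    (hsigned : ∀ X ∈ C, ∀ e, X e = -1 ∨ X e = 0 ∨ X e = 1)
    -- (OC0): the empty signed set is not a circuit
    (hOC0 : ∀ X ∈ C, sgnSupp X ≠ ∅)
    -- (OC1): symmetry
    (hOC1 : ∀ X ∈ C, -X ∈ C)
    -- (OC2): incomparability
    (hOC2 : ∀ X ∈ C, ∀ Y ∈ C, sgnSupp X ⊆ sgnSupp Y → X = Y ∨ X = -Y)
    -- (OC3'): strong elimination
    (hOC3 : ∀ X ∈ C, ∀ Y ∈ C, ∀ e, X e = 1 → Y e = -1 →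
      ∀ f, ((X f = 1 ∧ Y f ≠ -1) ∨ (X f = -1 ∧ Y f ≠ 1)) →
      ∃ Z ∈ C, Z f ≠ 0 ∧
        (∀ g, Z g = 1 → (X g = 1 ∨ Y g = 1) ∧ g ≠ e) ∧
        (∀ g, Z g = -1 → (X g = -1 ∨ Y g = -1) ∧ g ≠ e))
    -- the underlying matroid: its circuits are the supports of elements of C
    (M : FinMatroid (Fin n)) (hME : M.E = Finset.univ)
    (hcirc : ∀ S, M.Circuit S ↔ ∃ X ∈ C, sgnSupp X = S)
    (i j : Fin n) (K : Finset (Fin n)) (hij : i ≠ j) (hiK : i ∉ K) (hjK : j ∉ K)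
    -- (ij|K) is a conditional dependence statement of the underlying matroid
    (hdep : ¬ M.CI i j K)
    (X : Fin n → ℤ) (hX : X ∈ C) (Y : Fin n → ℤ) (hY : Y ∈ C)
    (hXi : i ∈ sgnSupp X) (hXj : j ∈ sgnSupp X)
    (hXsub : sgnSupp X ⊆ insert i (insert j K))
    (hYi : i ∈ sgnSupp Y) (hYj : j ∈ sgnSupp Y)
    (hYsub : sgnSupp Y ⊆ insert i (insert j K)) :
    X i * X j = Y i * Y j := by
  by_contra hne
  simp only [sgnSupp, mem_filter, mem_univ, true_and] at hXi hXj hYi hYj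
  have hXi' : X i = -1 ∨ X i = 1 := by rcases hsigned X hX i with h | h | h <;> tauto
  have hXj' : X j = -1 ∨ X j = 1 := by rcases hsigned X hX j with h | h | h <;> tauto
  have hYi' : Y i = -1 ∨ Y i = 1 := by rcases hsigned Y hY i with h | h | h <;> tauto
  have hYj' : Y j = -1 ∨ Y j = 1 := by rcases hsigned Y hY j with h | h | h <;> tauto
  -- normalize X so that X' i = 1
  obtain ⟨X', hX'C, hX'i, hX'supp, hX'prod⟩ :
      ∃ X' ∈ C, X' i = 1 ∧ sgnSupp X' = sgnSupp X ∧ X' i * X' j = X i * X j := by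
    rcases hXi' with h | h
    · exact ⟨-X, hOC1 X hX, by simp [h], supp_neg X, by simp only [Pi.neg_apply]; ring⟩
    · exact ⟨X, hX, h, rfl, rfl⟩
  -- normalize Y so that Y' i = -1
  obtain ⟨Y', hY'C, hY'i, hY'supp, hY'prod⟩ :
      ∃ Y' ∈ C, Y' i = -1 ∧ sgnSupp Y' = sgnSupp Y ∧ Y' i * Y' j = Y i * Y j := by
    rcases hYi' with h | h
    · exact ⟨Y, hY, h, rfl, rfl⟩
    · exact ⟨-Y, hOC1 Y hY, by simp [h], supp_neg Y, by simp only [Pi.neg_apply]; ring⟩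
  have hprodX : X i * X j = 1 ∨ X i * X j = -1 := by
    rcases hXi' with h | h <;> rcases hXj' with h' | h' <;> simp [h, h']
  have hprodY : Y i * Y j = 1 ∨ Y i * Y j = -1 := by
    rcases hYi' with h | h <;> rcases hYj' with h' | h' <;> simp [h, h']
  have hX'j : X' j = X i * X j := by rw [← hX'prod, hX'i]; ring
  have hY'j : Y' j = X i * X j := by
    have : Y' j = -(Y i * Y j) := by rw [← hY'prod, hY'i]; ring
    omega
  have hfcond : (X' j = 1 ∧ Y' j ≠ -1) ∨ (X' j = -1 ∧ Y' j ≠ 1) := by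
    rcases hprodX with h | h
    · left; constructor <;> omega
    · right; constructor <;> omega
  obtain ⟨Z, hZC, hZj, hZpos, hZneg⟩ :=
    hOC3 X' hX'C Y' hY'C i hX'i hY'i j hfcond
  have hjZ : j ∈ sgnSupp Z := by simp [sgnSupp, hZj]
  have hZsub : sgnSupp Z ⊆ insert j K := by
    intro g hg
    simp only [sgnSupp, mem_filter, mem_univ, true_and] at hg
    have hgXY : (g ∈ sgnSupp X' ∨ g ∈ sgnSupp Y') ∧ g ≠ i := by
      rcases hsigned Z hZC g with h | h | h
      · obtain ⟨h1, h2⟩ := hZneg g h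
        refine ⟨?_, h2⟩
        rcases h1 with h1 | h1
        · left; simp [sgnSupp, h1]
        · right; simp [sgnSupp, h1]
      · exact absurd h hg
      · obtain ⟨h1, h2⟩ := hZpos g h
        refine ⟨?_, h2⟩
        rcases h1 with h1 | h1
        · left; simp [sgnSupp, h1]
        · right; simp [sgnSupp, h1]
    obtain ⟨hmem, hgi⟩ := hgXY
    have : g ∈ insert i (insert j K) := by
      rcases hmem with h | h
      · exact hXsub (hX'supp ▸ h)
      · exact hYsub (hY'supp ▸ h)
    rcases mem_insert.1 this with h | h
    · exact absurd h hgi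
    · exact h
  have hcircZ : M.Circuit (sgnSupp Z) := (hcirc (sgnSupp Z)).2 ⟨Z, hZC, rfl⟩
  exact hdep (lemA M hME i j K hij hiK hjK (sgnSupp Z) hcircZ hjZ hZsub)
end

section
/- Let G be a CI-structure on a finite set E that satisfies the semigraphoid axiom (SG), the matroid axiom (MCI), and the gaussoid axioms (Int): {(ij|kL),(ik|jL)} ⊆ G ⇒ {(ij|L),(ik|L)} ⊆ G, and (Comp): {(ij|L),(ik|L)} ⊆ G ⇒ {(ij|kL),(ik|jL)} ⊆ G. Then: (a) (ij|K) ∉ G implies (ij|ℓK) ∉ G for any ℓ ∉ ijK; (b) (ij|ℓK) ∉ G implies (ij|K) ∉ G; (c) (ij|∅) ∉ G implies (iℓ|∅) ∈ G for any ℓ ∉ {i,j}. -/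
open Finset

/-- The intersection axiom (Int). -/
def IntAx {α : Type*} [DecidableEq α] (E : Finset α)
    (G : α → α → Finset α → Prop) : Prop :=
  ∀ i j k L, wf3 E i j k L →
    G i j (insert k L) → G i k (insert j L) → G i j L ∧ G i k L

/-- The composition axiom (Comp). -/
def CompAx {α : Type*} [DecidableEq α] (E : Finset α)
    (G : α → α → Finset α → Prop) : Prop :=
  ∀ i j k L, wf3 E i j k L →
    G i j L → G i k L → G i j (insert k L) ∧ G i k (insert j L)

/-- The weak transitivity axiom (WT). -/
def WTAx {α : Type*} [DecidableEq α] (E : Finset α)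
    (G : α → α → Finset α → Prop) : Prop :=
  ∀ i j k L, wf3 E i j k L →
    G i j L → G i j (insert k L) → G i k L ∨ G j k L

/-- for a CI-structure satisfying (SG), (MCI), (Int) and (Comp):
(a) dependence is preserved when enlarging the conditioning set by one element;
(b) dependence is preserved when shrinking it by one element;
(c) `(ij|∅) ∉ G` implies `(iℓ|∅) ∈ G`. -/
theorem gaussoid_matroid_claims {α : Type*} [DecidableEq α] (E : Finset α)
    (G : α → α → Finset α → Prop) (hG : IsCIStructOn E G)
    (hSG : SGax E G) (hMCI : MCIax E G)
    (hInt : IntAx E G) (hComp : CompAx E G) :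
    (∀ i j ℓ K, wf3 E i j ℓ K → ¬ G i j K → ¬ G i j (insert ℓ K)) ∧
    (∀ i j ℓ K, wf3 E i j ℓ K → ¬ G i j (insert ℓ K) → ¬ G i j K) ∧
    (∀ i j ℓ, i ∈ E → j ∈ E → ℓ ∈ E → i ≠ j → i ≠ ℓ → j ≠ ℓ →
      ¬ G i j ∅ → G i ℓ ∅) := by
  obtain ⟨hwf, hsym⟩ := hG
  refine ⟨?_, ?_, ?_⟩
  · intro i j ℓ K h hnij hijℓK
    obtain ⟨hi, hj, hℓ, hij, hiℓ, hjℓ, hiK, hjK, hℓK, hKE⟩ := h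
    have h1 : G i ℓ (insert j (K ∪ ∅)) :=
      hMCI i j ℓ K ∅ ⟨hi,hj,hℓ,hij,hiℓ,hjℓ,hiK,hjK,hℓK,hKE⟩ (by simp) hnij
    rw [Finset.union_empty] at h1
    exact hnij (hInt i j ℓ K ⟨hi,hj,hℓ,hij,hiℓ,hjℓ,hiK,hjK,hℓK,hKE⟩ hijℓK h1).1
  · intro i j ℓ K h hnijℓK hijK
    obtain ⟨hi, hj, hℓ, hij, hiℓ, hjℓ, hiK, hjK, hℓK, hKE⟩ := h
    by_cases hiℓK : G i ℓ K
    · exact hnijℓK (hComp i j ℓ K ⟨hi,hj,hℓ,hij,hiℓ,hjℓ,hiK,hjK,hℓK,hKE⟩ hijK hiℓK).1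
    · have h1 : G i j (insert ℓ (K ∪ ∅)) :=
        hMCI i ℓ j K ∅ ⟨hi,hℓ,hj,hiℓ,hij,hjℓ.symm,hiK,hℓK,hjK,hKE⟩ (by simp) hiℓK
      rw [Finset.union_empty] at h1
      exact hnijℓK h1
  · intro i j ℓ hi hj hℓ hij hiℓ hjℓ hnij
    have h1 : G i ℓ (insert j ((∅:Finset α) ∪ ∅)) :=
      hMCI i j ℓ ∅ ∅ ⟨hi,hj,hℓ,hij,hiℓ,hjℓ, by simp, by simp, by simp, by simp⟩
        (by simp) hnij
    have h2 : G j ℓ (insert i ((∅:Finset α) ∪ ∅)) :=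
      hMCI j i ℓ ∅ ∅ ⟨hj,hi,hℓ,hij.symm,hjℓ,hiℓ, by simp, by simp, by simp, by simp⟩
        (by simp) (fun hji => hnij (hsym _ _ _ hji))
    rw [Finset.union_empty] at h1 h2
    have h3 := hInt ℓ i j ∅
      ⟨hℓ,hi,hj,hiℓ.symm,hjℓ.symm,hij, by simp, by simp, by simp, by simp⟩
      (hsym _ _ _ h1) (hsym _ _ _ h2)
    exact hsym _ _ _ h3.1
end
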